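/- arXiv:1304.5209 — 3 statements merged into one kernel-verified Lean document; each statement's English description precedes it below -/
import Mathlib

section
/- Let k ≥ 1 be an integer and let d_1, d_2 < (1/2)(1 - 1/k) be real numbers. Suppose (a_i)_{i≥1} and (b_i)_{i≥1} are real sequences with |a_i| ≤ c_1 i^{d_1 - 1} and |b_i| ≤ c_2 i^{d_2 - 1} for all i ≥ 1 and some constants c_1, c_2 > 0 (with a_i = b_i = 0 for i ≤ 0). Define the cross-covariance γ_{1,2}(n) = ∑_{1 ≤ i_1 < ⋯ < i_k < ∞} a_{i_1} b_{n+i_1} ⋯ a_{i_k} b_{n+i_k} for n ∈ ℤ. Then ∑_{n ∈ ℤ} |γ_{1,2}(n)| < ∞. -/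
set_option maxHeartbeats 1000000

open scoped ENNReal NNReal BigOperators

namespace S4

lemma tsum_pi_pow (f : ℤ → ℝ≥0∞) : ∀ (k : ℕ),
    ∑' g : Fin k → ℤ, ∏ j, f (g j) = (∑' i, f i) ^ k := by
  intro k
  induction k with
  | zero =>
      rw [tsum_eq_single (default : Fin 0 → ℤ) (fun b hb => absurd (Subsingleton.elim b default) hb)]
      simp
  | succ n ih =>
      have he := ((Fin.consEquiv (fun _ : Fin (n+1) => ℤ)).tsum_eq (fun g : Fin (n+1) → ℤ => ∏ j, f (g j)))
      rw [← he]
      have : ∀ p : ℤ × (Fin n → ℤ),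
          (∏ j, f (((Fin.consEquiv (fun _ : Fin (n+1) => ℤ)) p) j)) = f p.1 * ∏ j, f (p.2 j) := by
        intro p
        rw [Fin.prod_univ_succ]
        simp [Fin.consEquiv]
      simp_rw [this]
      rw [ENNReal.tsum_prod (f := fun x (g : Fin n → ℤ) => f x * ∏ j, f (g j))]
      simp_rw [ENNReal.tsum_mul_left]
      rw [ENNReal.tsum_mul_right, ih, pow_succ, mul_comm]

lemma tsum_int_le (f : ℤ → ℝ≥0∞) :
    ∑' n : ℤ, f n ≤ ∑' m : ℕ, f m + ∑' m : ℕ, f (-(m + 1)) := by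
  have h1 : ∑' m : ℕ, f m = ∑' n : ℤ, (if 0 ≤ n then f n else 0) := by
    have := Function.Injective.tsum_eq (g := fun m : ℕ => (m : ℤ))
      (f := fun n : ℤ => if 0 ≤ n then f n else 0) ?_ ?_
    · simpa using this
    · exact fun x y h => by simpa using h
    · intro n hn
      simp only [Function.mem_support, ne_eq, ite_eq_right_iff, not_forall] at hn
      exact ⟨n.toNat, by simp [Int.toNat_of_nonneg hn.1]⟩
  have h2 : ∑' m : ℕ, f (-(m + 1)) = ∑' n : ℤ, (if n < 0 then f n else 0) := by
    have := Function.Injective.tsum_eq (g := fun m : ℕ => -((m : ℤ) + 1))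
      (f := fun n : ℤ => if n < 0 then f n else 0) ?_ ?_
    · simpa [show ∀ c : ℕ, (-1 : ℤ) < (c : ℤ) from fun c => by omega] using this
    · intro x y h; simp only [neg_inj, add_left_inj, Nat.cast_inj] at h; exact h
    · intro n hn
      simp only [Function.mem_support, ne_eq, ite_eq_right_iff, not_forall] at hn
      exact ⟨(-n - 1).toNat, by have := hn.1; simp only; omega⟩
  rw [h1, h2, ← ENNReal.tsum_add]
  refine ENNReal.tsum_le_tsum fun n => ?_
  by_cases h : 0 ≤ n
  · simp [h, not_lt.2 h]
  · simp [h, not_le.1 h]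

noncomputable def u (s : ℝ) (i : ℤ) : ℝ := if 1 ≤ i then (i : ℝ) ^ s else 0

lemma u_nonneg (s : ℝ) (i : ℤ) : 0 ≤ u s i := by
  unfold u; split
  · exact Real.rpow_nonneg (by positivity) _
  · exact le_refl 0

lemma sum_nat_ne_top {s : ℝ} (hs : s < -1) :
    ∑' m : ℕ, ENNReal.ofReal (((m : ℝ) + 1) ^ s) ≠ ⊤ := by
  have h0 : Summable (fun m : ℕ => ((m : ℝ) + 1) ^ s) := by
    have := (summable_nat_add_iff (f := fun m : ℕ => (m : ℝ) ^ s) 1).2 (Real.summable_nat_rpow.2 hs)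
    refine this.congr fun m => ?_
    push_cast; ring_nf
  rw [← ENNReal.ofReal_tsum_of_nonneg (fun m => Real.rpow_nonneg (by positivity) _) h0]
  exact ENNReal.ofReal_ne_top

lemma sum_u_ne_top {s : ℝ} (hs : s < -1) : ∑' i : ℤ, ENNReal.ofReal (u s i) ≠ ⊤ := by
  have key : ∑' m : ℕ, ENNReal.ofReal (u s ((m : ℤ) + 1)) = ∑' i : ℤ, ENNReal.ofReal (u s i) := by
    have := Function.Injective.tsum_eq (g := fun m : ℕ => (m : ℤ) + 1)
      (f := fun i : ℤ => ENNReal.ofReal (u s i)) ?_ ?_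
    · simpa using this
    · intro x y h; simpa using h
    · intro i hi
      have h1 : (1 : ℤ) ≤ i := by
        by_contra hc
        simp [u, hc] at hi
      exact ⟨(i - 1).toNat, by simp only; omega⟩
  rw [← key]
  have e : ∀ m : ℕ, u s ((m : ℤ) + 1) = ((m : ℝ) + 1) ^ s := by
    intro m
    have h1 : (1 : ℤ) ≤ (m : ℤ) + 1 := by omega
    simp only [u, h1, if_true]
    push_cast; ring_nf
  simp_rw [e]
  exact sum_nat_ne_top hs

lemma u_mul_le_pos {p q q' : ℝ} (hq'0 : q' ≤ 0) (hqq' : q ≤ q') {n : ℤ} (hn : 1 ≤ n) (i : ℤ) :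
    u p i * u q (n + i) ≤ u (p + q') i * (n : ℝ) ^ (q - q') := by
  by_cases hi : 1 ≤ i
  · have hni : (1 : ℤ) ≤ n + i := by omega
    simp only [u, hi, hni, if_true]
    have hi0 : (0 : ℝ) < (i : ℝ) := by exact_mod_cast by omega
    have hn0 : (0 : ℝ) < (n : ℝ) := by exact_mod_cast by omega
    have hni0 : (0 : ℝ) < ((n + i : ℤ) : ℝ) := by exact_mod_cast by omega
    rw [Real.rpow_add hi0]
    have key : ((n + i : ℤ) : ℝ) ^ q ≤ (i : ℝ) ^ q' * (n : ℝ) ^ (q - q') := by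
      have e1 : ((n + i : ℤ) : ℝ) ^ q = ((n + i : ℤ) : ℝ) ^ q' * ((n + i : ℤ) : ℝ) ^ (q - q') := by
        rw [← Real.rpow_add hni0]; ring_nf
      rw [e1]
      refine mul_le_mul ?_ ?_ (Real.rpow_nonneg hni0.le _) (Real.rpow_nonneg hi0.le _)
      · exact Real.rpow_le_rpow_of_nonpos hi0 (by push_cast; linarith) hq'0
      · exact Real.rpow_le_rpow_of_nonpos hn0 (by push_cast; linarith) (by linarith)
    calc (i : ℝ) ^ p * ((n + i : ℤ) : ℝ) ^ q
        ≤ (i : ℝ) ^ p * ((i : ℝ) ^ q' * (n : ℝ) ^ (q - q')) :=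
          mul_le_mul_of_nonneg_left key (Real.rpow_nonneg hi0.le _)
      _ = (i : ℝ) ^ p * (i : ℝ) ^ q' * (n : ℝ) ^ (q - q') := by ring
  · have h0 : u p i = 0 := by simp [u, hi]
    rw [h0, zero_mul]
    exact mul_nonneg (u_nonneg _ _)
      (Real.rpow_nonneg (by exact_mod_cast (by omega : (0:ℤ) ≤ n)) _)

lemma u_mul_le_neg {p q p' : ℝ} (hp'0 : p' ≤ 0) (hpp' : p ≤ p') {n : ℤ} (hn : n ≤ -1) (i : ℤ) :
    u p i * u q (n + i) ≤ u (q + p') (n + i) * ((-n : ℤ) : ℝ) ^ (p - p') := by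
  by_cases hni : 1 ≤ n + i
  · have hi : (1 : ℤ) ≤ i := by omega
    simp only [u, hi, hni, if_true]
    have hi0 : (0 : ℝ) < (i : ℝ) := by exact_mod_cast by omega
    have hn0 : (0 : ℝ) < ((-n : ℤ) : ℝ) := by exact_mod_cast by omega
    have hni0 : (0 : ℝ) < ((n + i : ℤ) : ℝ) := by exact_mod_cast by omega
    have hnr : ((n : ℤ) : ℝ) ≤ -1 := by exact_mod_cast hn
    have hnir : (1 : ℝ) ≤ (n : ℝ) + (i : ℝ) := by exact_mod_cast hni
    have key : (i : ℝ) ^ p ≤ ((n + i : ℤ) : ℝ) ^ p' * ((-n : ℤ) : ℝ) ^ (p - p') := by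
      have e1 : (i : ℝ) ^ p = (i : ℝ) ^ p' * (i : ℝ) ^ (p - p') := by
        rw [← Real.rpow_add hi0]; ring_nf
      rw [e1]
      refine mul_le_mul ?_ ?_ (Real.rpow_nonneg hi0.le _) (Real.rpow_nonneg hni0.le _)
      · exact Real.rpow_le_rpow_of_nonpos hni0 (by push_cast; linarith) hp'0
      · exact Real.rpow_le_rpow_of_nonpos hn0 (by push_cast; linarith) (by linarith)
    calc (i : ℝ) ^ p * ((n + i : ℤ) : ℝ) ^ q
        ≤ (((n + i : ℤ) : ℝ) ^ p' * ((-n : ℤ) : ℝ) ^ (p - p')) * ((n + i : ℤ) : ℝ) ^ q :=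
          mul_le_mul_of_nonneg_right key (Real.rpow_nonneg hni0.le _)
      _ = ((n + i : ℤ) : ℝ) ^ q * ((n + i : ℤ) : ℝ) ^ p' * ((-n : ℤ) : ℝ) ^ (p - p') := by ring
      _ = ((n + i : ℤ) : ℝ) ^ (q + p') * ((-n : ℤ) : ℝ) ^ (p - p') := by
          rw [← Real.rpow_add hni0]
  · have h0 : u q (n + i) = 0 := by simp [u, hni]
    rw [h0, mul_zero]
    exact mul_nonneg (u_nonneg _ _)
      (Real.rpow_nonneg (by exact_mod_cast (by omega : (0:ℤ) ≤ -n)) _)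

lemma u_mul_le_zero (p q : ℝ) (i : ℤ) : u p i * u q i ≤ u (p + q) i := by
  by_cases hi : 1 ≤ i
  · have hi0 : (0 : ℝ) < (i : ℝ) := by exact_mod_cast by omega
    simp only [u, hi, if_true, ← Real.rpow_add hi0]
    exact le_refl _
  · simp [u, hi]

lemma exists_exponent (k : ℕ) (hk : 1 ≤ k) (d1 d2 : ℝ)
    (hd1 : d1 < (1 / 2) * (1 - 1 / (k : ℝ))) (hd2 : d2 < (1 / 2) * (1 - 1 / (k : ℝ))) :
    ∃ q' : ℝ, q' ≤ 0 ∧ d2 - 1 ≤ q' ∧ (d1 - 1) + q' < -1 ∧ ((d2 - 1) - q') * k < -1 := by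
  have hkR : (1 : ℝ) ≤ (k : ℝ) := by exact_mod_cast hk
  have hkR0 : (0 : ℝ) < (k : ℝ) := by linarith
  have hε0 : 0 < 1 / (k : ℝ) := by positivity
  have hε1 : 1 / (k : ℝ) ≤ 1 := by rw [div_le_one hkR0]; exact hkR
  have hεk : (1 / (k : ℝ)) * (k : ℝ) = 1 := by field_simp
  have hA : (d2 - 1) + 1 / (k : ℝ) < 0 := by linarith
  have hB : (d2 - 1) + 1 / (k : ℝ) < -1 - (d1 - 1) := by linarith
  have hM1 : min 0 (-1 - (d1 - 1)) ≤ 0 := min_le_left _ _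
  have hM2 : min 0 (-1 - (d1 - 1)) ≤ -1 - (d1 - 1) := min_le_right _ _
  have hqεM : (d2 - 1) + 1 / (k : ℝ) < min 0 (-1 - (d1 - 1)) := lt_min hA hB
  refine ⟨((d2 - 1) + 1 / (k : ℝ) + min 0 (-1 - (d1 - 1))) / 2, by linarith, by linarith,
    by linarith, ?_⟩
  have h1 : (d2 - 1) - ((d2 - 1) + 1 / (k : ℝ) + min 0 (-1 - (d1 - 1))) / 2 < -(1 / (k : ℝ)) := by
    linarith
  calc ((d2 - 1) - ((d2 - 1) + 1 / (k : ℝ) + min 0 (-1 - (d1 - 1))) / 2) * (k : ℝ)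
      < -(1 / (k : ℝ)) * (k : ℝ) := mul_lt_mul_of_pos_right h1 hkR0
    _ = -1 := by rw [neg_mul, hεk]

lemma Psum_pos (c : ℝ) (hc : 0 ≤ c) {p q q' : ℝ} (hq'0 : q' ≤ 0) (hqq' : q ≤ q')
    {n : ℤ} (hn : 1 ≤ n) :
    ∑' i : ℤ, ENNReal.ofReal (c * (u p i * u q (n + i)))
      ≤ (ENNReal.ofReal c * ∑' i : ℤ, ENNReal.ofReal (u (p + q') i))
          * ENNReal.ofReal ((n : ℝ) ^ (q - q')) := by
  have key : ∀ i : ℤ, ENNReal.ofReal (c * (u p i * u q (n + i)))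
      ≤ (ENNReal.ofReal c * ENNReal.ofReal (u (p + q') i)) * ENNReal.ofReal ((n : ℝ) ^ (q - q')) := by
    intro i
    rw [← ENNReal.ofReal_mul hc, ← ENNReal.ofReal_mul (mul_nonneg hc (u_nonneg _ _))]
    refine ENNReal.ofReal_le_ofReal ?_
    calc c * (u p i * u q (n + i)) ≤ c * (u (p + q') i * (n : ℝ) ^ (q - q')) :=
        mul_le_mul_of_nonneg_left (u_mul_le_pos hq'0 hqq' hn i) hc
      _ = c * u (p + q') i * (n : ℝ) ^ (q - q') := by ring
  calc ∑' i : ℤ, ENNReal.ofReal (c * (u p i * u q (n + i)))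
      ≤ ∑' i : ℤ, (ENNReal.ofReal c * ENNReal.ofReal (u (p + q') i))
          * ENNReal.ofReal ((n : ℝ) ^ (q - q')) := ENNReal.tsum_le_tsum key
    _ = _ := by rw [ENNReal.tsum_mul_right, ENNReal.tsum_mul_left]

lemma Psum_neg (c : ℝ) (hc : 0 ≤ c) {p q p' : ℝ} (hp'0 : p' ≤ 0) (hpp' : p ≤ p')
    {n : ℤ} (hn : n ≤ -1) :
    ∑' i : ℤ, ENNReal.ofReal (c * (u p i * u q (n + i)))
      ≤ (ENNReal.ofReal c * ∑' i : ℤ, ENNReal.ofReal (u (q + p') i))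
          * ENNReal.ofReal (((-n : ℤ) : ℝ) ^ (p - p')) := by
  have key : ∀ i : ℤ, ENNReal.ofReal (c * (u p i * u q (n + i)))
      ≤ (ENNReal.ofReal c * ENNReal.ofReal (u (q + p') (n + i)))
          * ENNReal.ofReal (((-n : ℤ) : ℝ) ^ (p - p')) := by
    intro i
    rw [← ENNReal.ofReal_mul hc, ← ENNReal.ofReal_mul (mul_nonneg hc (u_nonneg _ _))]
    refine ENNReal.ofReal_le_ofReal ?_
    calc c * (u p i * u q (n + i)) ≤ c * (u (q + p') (n + i) * ((-n : ℤ) : ℝ) ^ (p - p')) :=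
        mul_le_mul_of_nonneg_left (u_mul_le_neg hp'0 hpp' hn i) hc
      _ = c * u (q + p') (n + i) * ((-n : ℤ) : ℝ) ^ (p - p') := by ring
  have htrans : ∑' i : ℤ, ENNReal.ofReal (u (q + p') (n + i))
      = ∑' i : ℤ, ENNReal.ofReal (u (q + p') i) :=
    (Equiv.addLeft n).tsum_eq (fun j : ℤ => ENNReal.ofReal (u (q + p') j))
  calc ∑' i : ℤ, ENNReal.ofReal (c * (u p i * u q (n + i)))
      ≤ ∑' i : ℤ, (ENNReal.ofReal c * ENNReal.ofReal (u (q + p') (n + i)))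
          * ENNReal.ofReal (((-n : ℤ) : ℝ) ^ (p - p')) := ENNReal.tsum_le_tsum key
    _ = (ENNReal.ofReal c * ∑' i : ℤ, ENNReal.ofReal (u (q + p') (n + i)))
          * ENNReal.ofReal (((-n : ℤ) : ℝ) ^ (p - p')) := by
        rw [ENNReal.tsum_mul_right, ENNReal.tsum_mul_left]
    _ = _ := by rw [htrans]

lemma Psum_zero (c : ℝ) (hc : 0 ≤ c) (p q : ℝ) :
    ∑' i : ℤ, ENNReal.ofReal (c * (u p i * u q ((0 : ℤ) + i)))
      ≤ ENNReal.ofReal c * ∑' i : ℤ, ENNReal.ofReal (u (p + q) i) := by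
  have key : ∀ i : ℤ, ENNReal.ofReal (c * (u p i * u q ((0 : ℤ) + i)))
      ≤ ENNReal.ofReal c * ENNReal.ofReal (u (p + q) i) := by
    intro i
    rw [← ENNReal.ofReal_mul hc]
    refine ENNReal.ofReal_le_ofReal ?_
    have : ((0 : ℤ) + i) = i := by ring
    rw [this]
    exact mul_le_mul_of_nonneg_left (u_mul_le_zero p q i) hc
  calc ∑' i : ℤ, ENNReal.ofReal (c * (u p i * u q ((0 : ℤ) + i)))
      ≤ ∑' i : ℤ, ENNReal.ofReal c * ENNReal.ofReal (u (p + q) i) := ENNReal.tsum_le_tsum key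
    _ = _ := ENNReal.tsum_mul_left

end S4

/-- Strictly increasing `k`-tuples of positive integers `1 ≤ i_1 < ⋯ < i_k`. -/
def IncrTupleZ (k : ℕ) : Type := {f : Fin k → ℤ // StrictMono f ∧ ∀ j, 0 < f j}

namespace S4

lemma gamma_bound (k : ℕ) (a b w v : ℤ → ℝ) (hw : ∀ i, 0 ≤ w i)
    (habs : ∀ i, |a i| ≤ w i) (hbabs : ∀ i, |b i| ≤ v i) (n : ℤ) :
    (‖∑' t : IncrTupleZ k, ∏ j, (a (t.1 j) * b (n + t.1 j))‖₊ : ℝ≥0∞)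
      ≤ (∑' i : ℤ, ENNReal.ofReal (w i * v (n + i))) ^ k := by
  set G : (Fin k → ℤ) → ℝ := fun g => ∏ j, (a (g j) * b (n + g j)) with hG
  have hinj : Function.Injective (fun t : IncrTupleZ k => t.1) := fun x y hxy => Subtype.ext hxy
  have step1 : (‖∑' t : IncrTupleZ k, G t.1‖₊ : ℝ≥0∞) ≤ ∑' t : IncrTupleZ k, (‖G t.1‖₊ : ℝ≥0∞) := by
    by_cases hs : Summable fun t : IncrTupleZ k => ‖G t.1‖₊
    · rw [← ENNReal.coe_tsum hs]
      exact ENNReal.coe_le_coe.2 (nnnorm_tsum_le hs)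
    · have hs' : ¬ Summable (fun t : IncrTupleZ k => G t.1) := fun h => hs (by
        rw [← NNReal.summable_coe]
        simpa [coe_nnnorm] using summable_norm_iff.2 h)
      rw [tsum_eq_zero_of_not_summable hs']
      simp
  have step3 : ∀ g : Fin k → ℤ, (‖G g‖₊ : ℝ≥0∞) ≤ ∏ j, ENNReal.ofReal (w (g j) * v (n + g j)) := by
    intro g
    have e : (‖G g‖₊ : ℝ≥0∞) = ∏ j, (‖a (g j) * b (n + g j)‖₊ : ℝ≥0∞) := by
      rw [hG]; push_cast [nnnorm_prod]; rfl
    rw [e]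
    refine Finset.prod_le_prod' fun j _ => ?_
    rw [← ENNReal.ofReal_coe_nnreal, coe_nnnorm, Real.norm_eq_abs]
    refine ENNReal.ofReal_le_ofReal ?_
    rw [abs_mul]
    exact mul_le_mul (habs _) (hbabs _) (abs_nonneg _) (hw _)
  calc (‖∑' t : IncrTupleZ k, G t.1‖₊ : ℝ≥0∞)
      ≤ ∑' t : IncrTupleZ k, (‖G t.1‖₊ : ℝ≥0∞) := step1
    _ ≤ ∑' g : Fin k → ℤ, (‖G g‖₊ : ℝ≥0∞) :=
        ENNReal.tsum_comp_le_tsum_of_injective hinj _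
    _ ≤ ∑' g : Fin k → ℤ, ∏ j, ENNReal.ofReal (w (g j) * v (n + g j)) :=
        ENNReal.tsum_le_tsum step3
    _ = (∑' i : ℤ, ENNReal.ofReal (w i * v (n + i))) ^ k :=
        tsum_pi_pow (fun i => ENNReal.ofReal (w i * v (n + i))) k

end S4

/-- absolute summability of the cross-covariance
`γ_{1,2}(n) = ∑_{1 ≤ i_1 < ⋯ < i_k} a_{i_1} b_{n+i_1} ⋯ a_{i_k} b_{n+i_k}` for sequences
satisfying the power-law bounds `|a_i| ≤ c_1 i^{d_1-1}`, `|b_i| ≤ c_2 i^{d_2-1}` with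
`d_1, d_2 < (1/2)(1 - 1/k)`. -/
theorem statement4 (k : ℕ) (hk : 1 ≤ k) (d1 d2 : ℝ)
    (hd1 : d1 < (1 / 2) * (1 - 1 / (k : ℝ))) (hd2 : d2 < (1 / 2) * (1 - 1 / (k : ℝ)))
    (c1 c2 : ℝ) (hc1 : 0 < c1) (hc2 : 0 < c2)
    (a b : ℤ → ℝ)
    (ha0 : ∀ i : ℤ, i ≤ 0 → a i = 0) (hb0 : ∀ i : ℤ, i ≤ 0 → b i = 0)
    (ha : ∀ i : ℤ, 1 ≤ i → |a i| ≤ c1 * (i : ℝ) ^ (d1 - 1))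
    (hb : ∀ i : ℤ, 1 ≤ i → |b i| ≤ c2 * (i : ℝ) ^ (d2 - 1))
    (γ12 : ℤ → ℝ)
    (hγ12 : ∀ n : ℤ, γ12 n = ∑' i : IncrTupleZ k, ∏ j, (a (i.1 j) * b (n + i.1 j))) :
    Summable fun n : ℤ => |γ12 n| := by
  classical
  obtain ⟨q', hq'0, hqq', hpq', hqk⟩ := S4.exists_exponent k hk d1 d2 hd1 hd2
  obtain ⟨p', hp'0, hpp', hqp', hpk⟩ := S4.exists_exponent k hk d2 d1 hd2 hd1
  set p : ℝ := d1 - 1 with hp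
  set q : ℝ := d2 - 1 with hq
  have habs : ∀ i, |a i| ≤ c1 * S4.u p i := by
    intro i
    by_cases hi : (1 : ℤ) ≤ i
    · simpa [S4.u, hi] using ha i hi
    · rw [ha0 i (by omega)]; simp [S4.u, hi]
  have hbabs : ∀ i, |b i| ≤ c2 * S4.u q i := by
    intro i
    by_cases hi : (1 : ℤ) ≤ i
    · simpa [S4.u, hi] using hb i hi
    · rw [hb0 i (by omega)]; simp [S4.u, hi]
  have hw : ∀ i, 0 ≤ c1 * S4.u p i := fun i => mul_nonneg hc1.le (S4.u_nonneg _ _)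
  have hcc : (0 : ℝ) ≤ c1 * c2 := mul_nonneg hc1.le hc2.le
  set P : ℤ → ℝ≥0∞ :=
    fun n => ∑' i : ℤ, ENNReal.ofReal ((c1 * c2) * (S4.u p i * S4.u q (n + i))) with hP
  have hγb : ∀ n : ℤ, (‖γ12 n‖₊ : ℝ≥0∞) ≤ P n ^ k := by
    intro n
    rw [hγ12 n]
    refine (S4.gamma_bound k a b (fun i => c1 * S4.u p i) (fun i => c2 * S4.u q i)
      hw habs hbabs n).trans (le_of_eq ?_)
    simp only [hP]
    congr 1
    refine tsum_congr fun i => ?_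
    congr 1
    ring
  -- finiteness of auxiliary sums
  have hS1 : ∑' i : ℤ, ENNReal.ofReal (S4.u (p + q') i) ≠ ⊤ := S4.sum_u_ne_top hpq'
  have hS2 : ∑' i : ℤ, ENNReal.ofReal (S4.u (q + p') i) ≠ ⊤ := S4.sum_u_ne_top hqp'
  have hpq : p + q < -1 := by rw [hp, hq]; linarith
  have hS0 : ∑' i : ℤ, ENNReal.ofReal (S4.u (p + q) i) ≠ ⊤ := S4.sum_u_ne_top hpq
  set C1 : ℝ≥0∞ := ENNReal.ofReal (c1 * c2) * ∑' i : ℤ, ENNReal.ofReal (S4.u (p + q') i) with hC1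
  set C2 : ℝ≥0∞ := ENNReal.ofReal (c1 * c2) * ∑' i : ℤ, ENNReal.ofReal (S4.u (q + p') i) with hC2
  have hC1top : C1 ≠ ⊤ := ENNReal.mul_ne_top ENNReal.ofReal_ne_top hS1
  have hC2top : C2 ≠ ⊤ := ENNReal.mul_ne_top ENNReal.ofReal_ne_top hS2
  -- positive-side bound
  have hposb : ∀ m : ℕ, P ((m : ℤ) + 1) ^ k ≤ C1 ^ k * ENNReal.ofReal (((m : ℝ) + 1) ^ ((q - q') * k)) := by
    intro m
    have h1 : (1 : ℤ) ≤ (m : ℤ) + 1 := by omega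
    have hb1 : P ((m : ℤ) + 1) ≤ C1 * ENNReal.ofReal ((((m : ℤ) + 1 : ℤ) : ℝ) ^ (q - q')) := by
      simp only [hP, hC1]
      exact S4.Psum_pos (c1 * c2) hcc hq'0 hqq' h1
    have hcast : ((((m : ℤ) + 1 : ℤ)) : ℝ) = (m : ℝ) + 1 := by push_cast; ring
    rw [hcast] at hb1
    have hbase : (0 : ℝ) ≤ (m : ℝ) + 1 := by positivity
    calc P ((m : ℤ) + 1) ^ k ≤ (C1 * ENNReal.ofReal (((m : ℝ) + 1) ^ (q - q'))) ^ k :=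
          pow_le_pow_left' hb1 k
      _ = C1 ^ k * ENNReal.ofReal (((m : ℝ) + 1) ^ (q - q')) ^ k := mul_pow _ _ _
      _ = C1 ^ k * ENNReal.ofReal ((((m : ℝ) + 1) ^ (q - q')) ^ k) := by
          rw [ENNReal.ofReal_pow (Real.rpow_nonneg hbase _)]
      _ = C1 ^ k * ENNReal.ofReal (((m : ℝ) + 1) ^ ((q - q') * k)) := by
          rw [← Real.rpow_natCast (((m : ℝ) + 1) ^ (q - q')) k, ← Real.rpow_mul hbase]
  -- negative-side bound
  have hnegb : ∀ m : ℕ, P (-((m : ℤ) + 1)) ^ k ≤ C2 ^ k * ENNReal.ofReal (((m : ℝ) + 1) ^ ((p - p') * k)) := by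
    intro m
    have h1 : -((m : ℤ) + 1) ≤ -1 := by omega
    have hb1 : P (-((m : ℤ) + 1)) ≤ C2 * ENNReal.ofReal (((-(-((m : ℤ) + 1)) : ℤ) : ℝ) ^ (p - p')) := by
      simp only [hP, hC2]
      exact S4.Psum_neg (c1 * c2) hcc hp'0 hpp' h1
    have hcast : (((-(-((m : ℤ) + 1)) : ℤ)) : ℝ) = (m : ℝ) + 1 := by push_cast; ring
    rw [hcast] at hb1
    have hbase : (0 : ℝ) ≤ (m : ℝ) + 1 := by positivity
    calc P (-((m : ℤ) + 1)) ^ k ≤ (C2 * ENNReal.ofReal (((m : ℝ) + 1) ^ (p - p'))) ^ k :=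
          pow_le_pow_left' hb1 k
      _ = C2 ^ k * ENNReal.ofReal (((m : ℝ) + 1) ^ (p - p')) ^ k := mul_pow _ _ _
      _ = C2 ^ k * ENNReal.ofReal ((((m : ℝ) + 1) ^ (p - p')) ^ k) := by
          rw [ENNReal.ofReal_pow (Real.rpow_nonneg hbase _)]
      _ = C2 ^ k * ENNReal.ofReal (((m : ℝ) + 1) ^ ((p - p') * k)) := by
          rw [← Real.rpow_natCast (((m : ℝ) + 1) ^ (p - p')) k, ← Real.rpow_mul hbase]
  have hP0 : P 0 ≠ ⊤ := by
    have hle : P 0 ≤ ENNReal.ofReal (c1 * c2) * ∑' i : ℤ, ENNReal.ofReal (S4.u (p + q) i) := by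
      simp only [hP]
      exact S4.Psum_zero (c1 * c2) hcc p q
    exact ne_top_of_le_ne_top (ENNReal.mul_ne_top ENNReal.ofReal_ne_top hS0) hle
  -- sum over positive part
  have hsum_pos : ∑' m : ℕ, P m ^ k ≠ ⊤ := by
    rw [tsum_eq_zero_add' ENNReal.summable]
    refine ENNReal.add_ne_top.2 ⟨?_, ?_⟩
    · simpa using ENNReal.pow_ne_top hP0
    · refine ne_top_of_le_ne_top ?_ (ENNReal.tsum_le_tsum (fun m => by
        simpa using hposb m))
      rw [ENNReal.tsum_mul_left]
      exact ENNReal.mul_ne_top (ENNReal.pow_ne_top hC1top) (S4.sum_nat_ne_top hqk)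
  have hsum_neg : ∑' m : ℕ, P (-((m : ℤ) + 1)) ^ k ≠ ⊤ := by
    refine ne_top_of_le_ne_top ?_ (ENNReal.tsum_le_tsum hnegb)
    rw [ENNReal.tsum_mul_left]
    exact ENNReal.mul_ne_top (ENNReal.pow_ne_top hC2top) (S4.sum_nat_ne_top hpk)
  -- total
  have key : ∑' n : ℤ, (‖γ12 n‖₊ : ℝ≥0∞) ≠ ⊤ := by
    refine ne_top_of_le_ne_top ?_ ((ENNReal.tsum_le_tsum hγb).trans
      (S4.tsum_int_le fun n => P n ^ k))
    exact ENNReal.add_ne_top.2 ⟨hsum_pos, hsum_neg⟩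
  have hsum : Summable fun n : ℤ => ‖γ12 n‖₊ := ENNReal.tsum_coe_ne_top_iff_summable.1 key
  have := NNReal.summable_coe.2 hsum
  refine this.congr fun n => ?_
  simp [coe_nnnorm, Real.norm_eq_abs]
end

section
/- Let (ε_i)_{i∈ℤ} be i.i.d. real random variables with E[ε_0] = 0 and E[ε_0^2] = 1. Let k ≥ 1 be an integer and (a_i)_{i≥1} a real sequence with ∑_{i=1}^∞ |a_i| < ∞ (a_i = 0 for i ≤ 0). Define X(n) = ∑_{1 ≤ i_1 < ⋯ < i_k < ∞} a_{i_1} ⋯ a_{i_k} ε_{n-i_1} ⋯ ε_{n-i_k}, which converges absolutely almost surely. Then for every n ∈ ℤ, X(n) is square-integrable, E[X(n)] = 0, E[X(0)^2] = ∑_{1 ≤ i_1 < ⋯ < i_k < ∞} a_{i_1}^2 ⋯ a_{i_k}^2, and E[X(n) X(0)] = ∑_{1 ≤ i_1 < ⋯ < i_k < ∞} a_{n+i_1} a_{i_1} ⋯ a_{n+i_k} a_{i_k}. -/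
open MeasureTheory ProbabilityTheory
open scoped ENNReal NNReal
set_option maxHeartbeats 1000000


section Helpers

variable {Ω : Type*} [MeasurableSpace Ω] {μ : Measure Ω}

lemma myMeasurable_tsum_real {ι : Type*} [Countable ι] {f : ι → Ω → ℝ}
    (hf : ∀ i, Measurable (f i)) : Measurable fun ω => ∑' i, f i ω := by
  classical
  set A : Set Ω := {ω | ∑' i, (‖f i ω‖₊ : ℝ≥0∞) < ⊤} with hA
  have hAm : MeasurableSet A :=
    measurableSet_lt (Measurable.ennreal_tsum fun i => (hf i).nnnorm.coe_nnreal_ennreal) measurable_const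
  have key : (fun ω => ∑' i, f i ω) = A.indicator (fun ω =>
      (∑' i, ENNReal.ofReal (f i ω)).toReal - (∑' i, ENNReal.ofReal (-f i ω)).toReal) := by
    funext ω
    by_cases hs : Summable fun i => f i ω
    · have habs : Summable fun i => |f i ω| := summable_abs_iff.2 hs
      have hmem : ω ∈ A := by
        have h1 : Summable fun i => ‖f i ω‖₊ := by
          rw [← NNReal.summable_coe]
          simpa [Real.norm_eq_abs] using habs
        simpa [A, lt_top_iff_ne_top] using ENNReal.tsum_coe_ne_top_iff_summable.2 h1
      rw [Set.indicator_of_mem hmem]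
      have hplus : Summable fun i => max (f i ω) 0 :=
        Summable.of_nonneg_of_le (fun i => le_max_right _ _)
          (fun i => max_le (le_abs_self _) (abs_nonneg _)) habs
      have hminus : Summable fun i => max (-f i ω) 0 :=
        Summable.of_nonneg_of_le (fun i => le_max_right _ _)
          (fun i => max_le (neg_le_abs _) (abs_nonneg _)) habs
      have h1 : (∑' i, ENNReal.ofReal (f i ω)).toReal = ∑' i, max (f i ω) 0 := by
        have e : ∀ i, ENNReal.ofReal (f i ω) = ENNReal.ofReal (max (f i ω) 0) := by
          intro i; rcases le_total (f i ω) 0 with h | h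
          · rw [ENNReal.ofReal_of_nonpos h, max_eq_right h, ENNReal.ofReal_zero]
          · rw [max_eq_left h]
        simp_rw [e]
        rw [← ENNReal.ofReal_tsum_of_nonneg (fun i => le_max_right _ _) hplus,
          ENNReal.toReal_ofReal (tsum_nonneg fun i => le_max_right _ _)]
      have h2 : (∑' i, ENNReal.ofReal (-f i ω)).toReal = ∑' i, max (-f i ω) 0 := by
        have e : ∀ i, ENNReal.ofReal (-f i ω) = ENNReal.ofReal (max (-f i ω) 0) := by
          intro i; rcases le_total (-f i ω) 0 with h | h
          · rw [ENNReal.ofReal_of_nonpos h, max_eq_right h, ENNReal.ofReal_zero]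
          · rw [max_eq_left h]
        simp_rw [e]
        rw [← ENNReal.ofReal_tsum_of_nonneg (fun i => le_max_right _ _) hminus,
          ENNReal.toReal_ofReal (tsum_nonneg fun i => le_max_right _ _)]
      rw [h1, h2, ← Summable.tsum_sub hplus hminus]
      refine tsum_congr fun i => ?_
      rcases le_total (f i ω) 0 with h | h
      · rw [max_eq_right h, max_eq_left (by linarith), zero_sub, neg_neg]
      · rw [max_eq_left h, max_eq_right (by linarith), sub_zero]
    · rw [tsum_eq_zero_of_not_summable hs, Set.indicator_of_notMem ?_]
      intro hmem
      have h1 : Summable fun i => ‖f i ω‖₊ :=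
        ENNReal.tsum_coe_ne_top_iff_summable.1 (by simpa [A, lt_top_iff_ne_top] using hmem)
      have h2 : Summable fun i => ‖f i ω‖ := by
        rw [← NNReal.summable_coe] at h1; simpa using h1
      exact hs h2.of_norm
  rw [key]
  exact Measurable.indicator
    (((Measurable.ennreal_tsum fun i => ENNReal.measurable_ofReal.comp (hf i)).ennreal_toReal).sub
      ((Measurable.ennreal_tsum fun i =>
        ENNReal.measurable_ofReal.comp (hf i).neg).ennreal_toReal)) hAm

lemma myEnnnorm_tsum_le {ι : Type*} (f : ι → ℝ) :
    (‖∑' i, f i‖₊ : ℝ≥0∞) ≤ ∑' i, (‖f i‖₊ : ℝ≥0∞) := by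
  by_cases h : Summable fun i => ‖f i‖₊
  · calc (‖∑' i, f i‖₊ : ℝ≥0∞) ≤ ((∑' i, ‖f i‖₊ : ℝ≥0) : ℝ≥0∞) :=
        ENNReal.coe_le_coe.2 (nnnorm_tsum_le h)
    _ = ∑' i, (‖f i‖₊ : ℝ≥0∞) := ENNReal.coe_tsum h
  · have h1 : (∑' i, (‖f i‖₊ : ℝ≥0∞)) = ⊤ := by
      by_contra hne; exact h (ENNReal.tsum_coe_ne_top_iff_summable.1 hne)
    simp [h1]

lemma myIntegrable_tsum {ι : Type*} [Countable ι] {f : ι → Ω → ℝ}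
    (hfm : ∀ i, Measurable (f i)) (h : ∑' i, ∫⁻ ω, (‖f i ω‖₊ : ℝ≥0∞) ∂μ ≠ ⊤) :
    Integrable (fun ω => ∑' i, f i ω) μ := by
  refine ⟨(myMeasurable_tsum_real hfm).aestronglyMeasurable, ?_⟩
  rw [hasFiniteIntegral_def]
  calc ∫⁻ ω, (‖∑' i, f i ω‖₊ : ℝ≥0∞) ∂μ
      ≤ ∫⁻ ω, ∑' i, (‖f i ω‖₊ : ℝ≥0∞) ∂μ := lintegral_mono fun ω => myEnnnorm_tsum_le _
    _ = ∑' i, ∫⁻ ω, (‖f i ω‖₊ : ℝ≥0∞) ∂μ := lintegral_tsum fun i => ((hfm i).nnnorm.coe_nnreal_ennreal).aemeasurable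
    _ < ⊤ := h.lt_top

lemma mySummable_pi_prod {g : ℤ → ℝ} (hg0 : ∀ x, 0 ≤ g x) (hg : Summable g) :
    ∀ k : ℕ, Summable fun f : Fin k → ℤ => ∏ j, g (f j) := by
  intro k
  induction k with
  | zero => exact .of_finite
  | succ k IH =>
      have h2 : Summable fun p : ℤ × (Fin k → ℤ) => g p.1 * ∏ j, g (p.2 j) := by
        have := Summable.mul_of_nonneg (f := g) (g := fun f : Fin k → ℤ => ∏ j, g (f j)) hg IH
          hg0 (fun f => Finset.prod_nonneg fun j _ => hg0 _)
        exact this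
      refine ((Fin.consEquiv (fun _ => ℤ)).summable_iff).1 ?_
      have hcomp : ((fun f : Fin (k+1) → ℤ => ∏ j, g (f j)) ∘ (Fin.consEquiv (fun _ => ℤ)))
          = fun p : ℤ × (Fin k → ℤ) => g p.1 * ∏ j, g (p.2 j) := by
        funext p
        simp [Fin.consEquiv, Fin.prod_univ_succ]
      rw [hcomp]; exact h2

end Helpers


section Indep

variable {Ω : Type*} [MeasurableSpace Ω] {μ : Measure Ω} [IsProbabilityMeasure μ]

lemma myProd_indep_integral {φ : ℤ → Ω → ℝ}
    (hind : iIndepFun φ μ)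
    (hφ : ∀ t, Measurable (φ t)) (hint : ∀ t, Integrable (φ t) μ) (S : Finset ℤ) :
    Integrable (fun ω => ∏ t ∈ S, φ t ω) μ ∧
      ∫ ω, ∏ t ∈ S, φ t ω ∂μ = ∏ t ∈ S, ∫ ω, φ t ω ∂μ := by
  classical
  induction S using Finset.induction with
  | empty => simpa using integrable_const (1 : ℝ)
  | @insert i s hi ih =>
    have hip : IndepFun (fun ω => ∏ t ∈ s, φ t ω) (φ i) μ := by
      have h := hind.indepFun_finsetProd_of_notMem hφ hi
      have : (∏ j ∈ s, φ j) = fun ω => ∏ t ∈ s, φ t ω := by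
        funext ω; exact Finset.prod_apply ω s φ
      rwa [this] at h
    have hint' : Integrable (fun ω => (∏ t ∈ s, φ t ω) * φ i ω) μ :=
      hip.integrable_mul ih.1 (hint i)
    constructor
    · have : (fun ω => ∏ t ∈ insert i s, φ t ω)
          = fun ω => (∏ t ∈ s, φ t ω) * φ i ω := by
        funext ω; rw [Finset.prod_insert hi, mul_comm]
      rwa [this]
    · have e1 : (fun ω => ∏ t ∈ insert i s, φ t ω)
          = fun ω => (∏ t ∈ s, φ t ω) * φ i ω := by
        funext ω; rw [Finset.prod_insert hi, mul_comm]
      have e2 : ∫ ω, (∏ t ∈ s, φ t ω) * φ i ω ∂μ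
          = integral μ ((fun ω => ∏ t ∈ s, φ t ω) * φ i) := rfl
      rw [e1, e2, hip.integral_mul_eq_mul_integral ih.1.aestronglyMeasurable (hint i).aestronglyMeasurable, ih.2, Finset.prod_insert hi,
        mul_comm]

lemma myComp_prod_integral {ε : ℤ → Ω → ℝ} (hmeas : ∀ t, Measurable (ε t))
    (hindep : iIndepFun ε μ)
    {g : ℤ → ℝ → ℝ} (hgm : ∀ t, Measurable (g t))
    (hgint : ∀ t, Integrable (fun ω => g t (ε t ω)) μ) (S : Finset ℤ) :
    Integrable (fun ω => ∏ t ∈ S, g t (ε t ω)) μ ∧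
      ∫ ω, ∏ t ∈ S, g t (ε t ω) ∂μ = ∏ t ∈ S, ∫ ω, g t (ε t ω) ∂μ := by
  exact myProd_indep_integral (hindep.comp g hgm) (fun t => (hgm t).comp (hmeas t)) hgint S

/-- purely algebraic: merging two injective tuple products into powers over the union -/
lemma myPair_prod_eq {k : ℕ} (x : ℤ → ℝ) (u v : Fin k → ℤ)
    (hu : Function.Injective u) (hv : Function.Injective v) :
    (∏ j, x (u j)) * (∏ j, x (v j)) =
      ∏ t ∈ Finset.image u Finset.univ ∪ Finset.image v Finset.univ,
        x t ^ (if t ∈ Finset.image u Finset.univ ∩ Finset.image v Finset.univ then 2 else 1) := by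
  classical
  set S := Finset.image u Finset.univ
  set T := Finset.image v Finset.univ
  have h1 : (∏ j, x (u j)) = ∏ t ∈ S, x t :=
    (Finset.prod_image (fun a _ b _ h => hu h)).symm
  have h2 : (∏ j, x (v j)) = ∏ t ∈ T, x t :=
    (Finset.prod_image (fun a _ b _ h => hv h)).symm
  have h3 : ∀ t ∈ S ∪ T, x t ^ (if t ∈ S ∩ T then 2 else 1)
      = x t * (if t ∈ S ∩ T then x t else 1) := by
    intro t _
    by_cases h : t ∈ S ∩ T <;> simp [h, sq]
  have h4 : (S ∪ T) ∩ (S ∩ T) = S ∩ T :=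
    Finset.inter_eq_right.2 fun t ht =>
      Finset.mem_union_left _ (Finset.mem_of_mem_inter_left ht)
  rw [h1, h2, Finset.prod_congr rfl h3, Finset.prod_mul_distrib, Finset.prod_ite_mem, h4,
    Finset.prod_union_inter]

end Indep

section Eps

variable {Ω : Type*} [MeasurableSpace Ω] {μ : Measure Ω} [IsProbabilityMeasure μ]
  {ε : ℤ → Ω → ℝ}

lemma myImage_eq_iff {k : ℕ} {u v : Fin k → ℤ} (hu : StrictAnti u) (hv : StrictAnti v) :
    Finset.image u Finset.univ = Finset.image v Finset.univ ↔ u = v := by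
  rw [← Finset.coe_inj]
  simp only [Finset.coe_image, Finset.coe_univ, Set.image_univ]
  exact StrictAnti.range_inj hu hv

lemma mySingle_integral (hmeas : ∀ t, Measurable (ε t))
    (hindep : iIndepFun ε μ)
    (hint1 : ∀ t, Integrable (ε t) μ) (hI1 : ∀ t, ∫ ω, ε t ω ∂μ = 0)
    {k : ℕ} (hk : 1 ≤ k) (u : Fin k → ℤ) (hu : Function.Injective u) :
    Integrable (fun ω => ∏ j, ε (u j) ω) μ ∧ ∫ ω, ∏ j, ε (u j) ω ∂μ = 0 := by
  classical
  have key := myComp_prod_integral hmeas hindep (g := fun _ x => x)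
    (fun t => measurable_id) hint1 (Finset.image u Finset.univ)
  have he : (fun ω => ∏ j, ε (u j) ω)
      = fun ω => ∏ t ∈ Finset.image u Finset.univ, ε t ω := by
    funext ω; exact (Finset.prod_image (g := u) (f := fun t => ε t ω) fun a _ b _ h => hu h).symm
  constructor
  · rw [he]; exact key.1
  · rw [he, key.2]
    have hne : (Finset.image u Finset.univ).Nonempty :=
      ⟨u ⟨0, hk⟩, Finset.mem_image_of_mem _ (Finset.mem_univ _)⟩
    obtain ⟨t0, ht0⟩ := hne
    exact Finset.prod_eq_zero ht0 (hI1 t0)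

lemma mySingle_integral_abs (hmeas : ∀ t, Measurable (ε t))
    (hindep : iIndepFun ε μ)
    (hintA : ∀ t, Integrable (fun ω => |ε t ω|) μ)
    {C : ℝ} (hIA : ∀ t, ∫ ω, |ε t ω| ∂μ ≤ C)
    {k : ℕ} (u : Fin k → ℤ) (hu : Function.Injective u) :
    Integrable (fun ω => ∏ j, |ε (u j) ω|) μ ∧ ∫ ω, ∏ j, |ε (u j) ω| ∂μ ≤ C ^ k := by
  classical
  have key := myComp_prod_integral hmeas hindep (g := fun _ x => |x|)
    (fun t => measurable_abs) hintA (Finset.image u Finset.univ)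
  have he : (fun ω => ∏ j, |ε (u j) ω|)
      = fun ω => ∏ t ∈ Finset.image u Finset.univ, |ε t ω| := by
    funext ω; exact (Finset.prod_image (g := u) (f := fun t => |ε t ω|) fun a _ b _ h => hu h).symm
  constructor
  · rw [he]; exact key.1
  · rw [he, key.2]
    have hcard : (Finset.image u Finset.univ).card = k := by
      rw [Finset.card_image_of_injective _ hu, Finset.card_univ, Fintype.card_fin]
    calc ∏ t ∈ Finset.image u Finset.univ, ∫ ω, |ε t ω| ∂μ
        ≤ ∏ _t ∈ Finset.image u Finset.univ, C :=
          Finset.prod_le_prod (fun t _ => integral_nonneg fun ω => abs_nonneg _)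
            (fun t _ => hIA t)
      _ = C ^ k := by rw [Finset.prod_const, hcard]

lemma myPair_integral (hmeas : ∀ t, Measurable (ε t))
    (hindep : iIndepFun ε μ)
    (hint1 : ∀ t, Integrable (ε t) μ) (hint2 : ∀ t, Integrable (fun ω => ε t ω ^ 2) μ)
    (hI1 : ∀ t, ∫ ω, ε t ω ∂μ = 0) (hI2 : ∀ t, ∫ ω, ε t ω ^ 2 ∂μ = 1)
    {k : ℕ} (u v : Fin k → ℤ) (hu : Function.Injective u) (hv : Function.Injective v) :
    Integrable (fun ω => (∏ j, ε (u j) ω) * (∏ j, ε (v j) ω)) μ ∧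
    ∫ ω, (∏ j, ε (u j) ω) * (∏ j, ε (v j) ω) ∂μ
      = (if Finset.image u Finset.univ = Finset.image v Finset.univ then 1 else 0) := by
  classical
  set S := Finset.image u Finset.univ with hS
  set T := Finset.image v Finset.univ with hT
  set g : ℤ → ℝ → ℝ := fun t x => x ^ (if t ∈ S ∩ T then 2 else 1) with hg
  have hgm : ∀ t, Measurable (g t) := fun t => measurable_id.pow_const _
  have hgint : ∀ t, Integrable (fun ω => g t (ε t ω)) μ := by
    intro t
    by_cases h : t ∈ S ∩ T <;> simp only [hg, h, if_true, if_false, pow_one]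
    · exact hint2 t
    · exact hint1 t
  have key := myComp_prod_integral hmeas hindep hgm hgint (S ∪ T)
  have he : (fun ω => (∏ j, ε (u j) ω) * (∏ j, ε (v j) ω))
      = fun ω => ∏ t ∈ S ∪ T, g t (ε t ω) := by
    funext ω
    exact myPair_prod_eq (fun t => ε t ω) u v hu hv
  constructor
  · rw [he]; exact key.1
  · rw [he, key.2]
    by_cases hST : S = T
    · rw [if_pos hST]
      refine Finset.prod_eq_one fun t ht => ?_
      have h2 : t ∈ S ∩ T := by
        rw [hST] at ht ⊢; rw [Finset.union_self] at ht
        rw [Finset.inter_self]; exact ht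
      simp only [hg, h2, if_true]
      exact hI2 t
    · rw [if_neg hST]
      have hex : ∃ t0 ∈ S ∪ T, t0 ∉ S ∩ T := by
        by_contra hcon
        push_neg at hcon
        apply hST
        apply Finset.Subset.antisymm
        · intro t ht
          exact Finset.mem_of_mem_inter_right (hcon t (Finset.mem_union_left _ ht))
        · intro t ht
          exact Finset.mem_of_mem_inter_left (hcon t (Finset.mem_union_right _ ht))
      obtain ⟨t0, ht0, ht0'⟩ := hex
      refine Finset.prod_eq_zero ht0 ?_
      simp only [hg, ht0', if_false, pow_one]
      exact hI1 t0

lemma myPair_integral_abs (hmeas : ∀ t, Measurable (ε t))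
    (hindep : iIndepFun ε μ)
    (hintA : ∀ t, Integrable (fun ω => |ε t ω|) μ)
    (hint2 : ∀ t, Integrable (fun ω => ε t ω ^ 2) μ)
    {C : ℝ} (hIA : ∀ t, ∫ ω, |ε t ω| ∂μ ≤ C) (hI2 : ∀ t, ∫ ω, ε t ω ^ 2 ∂μ = 1)
    (hC : 1 ≤ C)
    {k : ℕ} (u v : Fin k → ℤ) (hu : Function.Injective u) (hv : Function.Injective v) :
    Integrable (fun ω => (∏ j, |ε (u j) ω|) * (∏ j, |ε (v j) ω|)) μ ∧
    ∫ ω, (∏ j, |ε (u j) ω|) * (∏ j, |ε (v j) ω|) ∂μ ≤ C ^ (2 * k) := by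
  classical
  set S := Finset.image u Finset.univ with hS
  set T := Finset.image v Finset.univ with hT
  set g : ℤ → ℝ → ℝ := fun t x => |x| ^ (if t ∈ S ∩ T then 2 else 1) with hg
  have hgm : ∀ t, Measurable (g t) := fun t => measurable_abs.pow_const _
  have hgint : ∀ t, Integrable (fun ω => g t (ε t ω)) μ := by
    intro t
    by_cases h : t ∈ S ∩ T <;> simp only [hg, h, if_true, if_false, pow_one]
    · have : (fun ω => |ε t ω| ^ 2) = fun ω => ε t ω ^ 2 := by
        funext ω; rw [sq_abs]
      rw [this]; exact hint2 t
    · exact hintA t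
  have key := myComp_prod_integral hmeas hindep hgm hgint (S ∪ T)
  have he : (fun ω => (∏ j, |ε (u j) ω|) * (∏ j, |ε (v j) ω|))
      = fun ω => ∏ t ∈ S ∪ T, g t (ε t ω) := by
    funext ω
    exact myPair_prod_eq (fun t => |ε t ω|) u v hu hv
  have hC0 : (0:ℝ) ≤ C := le_trans zero_le_one hC
  constructor
  · rw [he]; exact key.1
  · rw [he, key.2]
    have hbound : ∀ t ∈ S ∪ T, ∫ ω, g t (ε t ω) ∂μ ≤ C := by
      intro t _
      by_cases h : t ∈ S ∩ T <;> simp only [hg, h, if_true, if_false, pow_one]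
      · have : (fun ω => |ε t ω| ^ 2) = fun ω => ε t ω ^ 2 := by
          funext ω; rw [sq_abs]
        rw [this, hI2 t]; exact hC
      · exact hIA t
    have hcard : (S ∪ T).card ≤ 2 * k := by
      calc (S ∪ T).card ≤ S.card + T.card := Finset.card_union_le _ _
        _ ≤ 2 * k := by
            rw [hS, hT, Finset.card_image_of_injective _ hu,
              Finset.card_image_of_injective _ hv, Finset.card_univ, Fintype.card_fin]
            omega
    calc ∏ t ∈ S ∪ T, ∫ ω, g t (ε t ω) ∂μ
        ≤ ∏ _t ∈ S ∪ T, C :=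
          Finset.prod_le_prod
            (fun t _ => integral_nonneg fun ω => by positivity) (hbound)
      _ = C ^ (S ∪ T).card := Finset.prod_const C
      _ ≤ C ^ (2 * k) := pow_le_pow_right₀ hC hcard

end Eps


/-- The multilinear polynomial-form process of order `k` with coefficients `a`
driven by the noise `ε`:
`X(n) = ∑_{1 ≤ i_1 < ⋯ < i_k} a_{i_1} ⋯ a_{i_k} ε_{n-i_1} ⋯ ε_{n-i_k}`. -/
noncomputable def polyForm {Ω : Type*} (k : ℕ) (a : ℤ → ℝ) (ε : ℤ → Ω → ℝ)
    (n : ℤ) (ω : Ω) : ℝ :=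
  ∑' i : IncrTupleZ k, ∏ j, (a (i.1 j) * ε (n - i.1 j) ω)

instance (k : ℕ) : Countable (IncrTupleZ k) := by
  unfold IncrTupleZ; infer_instance

/-- second-order properties of the multilinear polynomial-form process built
from i.i.d. noise with mean 0 and variance 1 and absolutely summable coefficients:
a.s. absolute convergence, square-integrability, zero mean, and the variance and
autocovariance formulas. -/
theorem statement7 {Ω : Type*} [MeasurableSpace Ω] (μ : Measure Ω) [IsProbabilityMeasure μ]
    (ε : ℤ → Ω → ℝ) (hmeas : ∀ i, Measurable (ε i))
    (hindep : iIndepFun ε μ)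
    (hident : ∀ i, IdentDistrib (ε i) (ε 0) μ μ)
    (hmean : ∫ ω, ε 0 ω ∂μ = 0) (hvar : ∫ ω, (ε 0 ω) ^ 2 ∂μ = 1)
    (k : ℕ) (hk : 1 ≤ k) (a : ℤ → ℝ)
    (ha0 : ∀ i : ℤ, i ≤ 0 → a i = 0) (ha : Summable fun i : ℤ => |a i|)
    (X : ℤ → Ω → ℝ) (hX : X = polyForm k a ε) :
    (∀ n : ℤ, ∀ᵐ ω ∂μ,
      Summable fun i : IncrTupleZ k => |∏ j, (a (i.1 j) * ε (n - i.1 j) ω)|) ∧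
    (∀ n : ℤ, MemLp (X n) 2 μ) ∧
    (∀ n : ℤ, ∫ ω, X n ω ∂μ = 0) ∧
    (∫ ω, (X 0 ω) ^ 2 ∂μ = ∑' i : IncrTupleZ k, ∏ j, (a (i.1 j)) ^ 2) ∧
    (∀ n : ℤ, ∫ ω, X n ω * X 0 ω ∂μ =
      ∑' i : IncrTupleZ k, ∏ j, (a (n + i.1 j) * a (i.1 j))) := by
  classical
  subst hX
  -- moment facts
  have hε2int0 : Integrable (fun ω => ε 0 ω ^ 2) μ := by
    by_contra h
    rw [integral_undef h] at hvar
    exact one_ne_zero hvar.symm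
  have hmemL2 : ∀ t, MemLp (ε t) 2 μ := by
    intro t
    have h0 : MemLp (ε 0) 2 μ :=
      (memLp_two_iff_integrable_sq (hmeas 0).aestronglyMeasurable).2 hε2int0
    exact (hident t).memLp_iff.2 h0
  have hint1 : ∀ t, Integrable (ε t) μ := fun t => (hmemL2 t).integrable one_le_two
  have hint2 : ∀ t, Integrable (fun ω => ε t ω ^ 2) μ := by
    intro t
    exact ((hident t).comp (measurable_id.pow_const 2)).integrable_iff.2 hε2int0
  have hI1 : ∀ t, ∫ ω, ε t ω ∂μ = 0 := fun t => by
    rw [(hident t).integral_eq]; exact hmean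
  have hI2 : ∀ t, ∫ ω, ε t ω ^ 2 ∂μ = 1 := fun t =>
    (((hident t).comp (measurable_id.pow_const 2)).integral_eq).trans hvar
  have hintA : ∀ t, Integrable (fun ω => |ε t ω|) μ := fun t => (hint1 t).abs
  set C : ℝ := max (∫ ω, |ε 0 ω| ∂μ) 1 with hCdef
  have hC1 : (1:ℝ) ≤ C := le_max_right _ _
  have hC0 : (0:ℝ) ≤ C := le_trans zero_le_one hC1
  have hIA : ∀ t, ∫ ω, |ε t ω| ∂μ ≤ C := fun t =>
    le_trans (le_of_eq (((hident t).comp measurable_abs).integral_eq)) (le_max_left _ _)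
  -- tuple index maps
  have hinj : ∀ (n : ℤ) (i : IncrTupleZ k), Function.Injective fun j => n - i.1 j := by
    intro n i j j' h
    have h' : n - i.1 j = n - i.1 j' := h
    exact i.2.1.injective (by omega)
  have hanti : ∀ (n : ℤ) (i : IncrTupleZ k), StrictAnti fun j => n - i.1 j := by
    intro n i j j' hlt
    have h' := i.2.1 hlt
    show n - i.1 j' < n - i.1 j
    omega
  -- terms
  set f : ℤ → IncrTupleZ k → Ω → ℝ :=
    fun n i ω => ∏ j, (a (i.1 j) * ε (n - i.1 j) ω) with hfdef
  set d : IncrTupleZ k → ℝ := fun i => ∏ j, |a (i.1 j)| with hddef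
  set c : IncrTupleZ k → ℝ := fun i => ∏ j, a (i.1 j) with hcdef
  have hfm : ∀ n i, Measurable (f n i) := fun n i =>
    Finset.univ.measurable_prod fun j _ => measurable_const.mul (hmeas _)
  have hsplit : ∀ n i ω, f n i ω = c i * ∏ j, ε (n - i.1 j) ω := fun n i ω =>
    Finset.prod_mul_distrib
  have habs : ∀ n i ω, |f n i ω| = d i * ∏ j, |ε (n - i.1 j) ω| := by
    intro n i ω
    show |∏ j, (a (i.1 j) * ε (n - i.1 j) ω)| = _
    rw [Finset.abs_prod]
    simp_rw [abs_mul]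
    exact Finset.prod_mul_distrib
  have hd0 : ∀ i, 0 ≤ d i := fun i => Finset.prod_nonneg fun j _ => abs_nonneg _
  have hfint : ∀ n i, Integrable (f n i) μ := by
    intro n i
    have h1 := (mySingle_integral hmeas hindep hint1 hI1 hk
      (fun j => n - i.1 j) (hinj n i)).1
    have h2 := h1.const_mul (c i)
    refine h2.congr (Filter.Eventually.of_forall fun ω => ?_)
    exact (hsplit n i ω).symm
  have hIf : ∀ n i, ∫ ω, f n i ω ∂μ = 0 := by
    intro n i
    have he : (fun ω => f n i ω) = fun ω => c i * ∏ j, ε (n - i.1 j) ω :=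
      funext (hsplit n i)
    rw [he, integral_const_mul,
      (mySingle_integral hmeas hindep hint1 hI1 hk (fun j => n - i.1 j) (hinj n i)).2, mul_zero]
  have habsint : ∀ n i, ∫ ω, |f n i ω| ∂μ ≤ d i * C ^ k := by
    intro n i
    have he : (fun ω => |f n i ω|) = fun ω => d i * ∏ j, |ε (n - i.1 j) ω| :=
      funext (habs n i)
    rw [he, integral_const_mul]
    exact mul_le_mul_of_nonneg_left
      ((mySingle_integral_abs hmeas hindep hintA hIA (fun j => n - i.1 j) (hinj n i)).2) (hd0 i)
  have hlin : ∀ n i, ∫⁻ ω, (‖f n i ω‖₊ : ℝ≥0∞) ∂μ = ENNReal.ofReal (∫ ω, |f n i ω| ∂μ) := by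
    intro n i
    erw [← ofReal_integral_norm_eq_lintegral_enorm (hfint n i)]
    simp_rw [Real.norm_eq_abs]
  -- summability of coefficients
  have hdsum : Summable d := by
    have h1 : Summable (fun g : Fin k → ℤ => ∏ j, |a (g j)|) :=
      mySummable_pi_prod (fun x => abs_nonneg _) ha k
    have h2 : Function.Injective (fun i : IncrTupleZ k => (i.1 : Fin k → ℤ)) :=
      fun x y h => Subtype.ext h
    exact h1.comp_injective h2
  have hdCsum : Summable (fun i => d i * C ^ k) := hdsum.mul_right _
  have hCk0 : (0:ℝ) ≤ C ^ k := pow_nonneg hC0 k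
  have hlinsum : ∀ n, ∑' i, ∫⁻ ω, (‖f n i ω‖₊ : ℝ≥0∞) ∂μ ≠ ⊤ := by
    intro n
    have hle : ∀ i, ∫⁻ ω, (‖f n i ω‖₊ : ℝ≥0∞) ∂μ ≤ ENNReal.ofReal (d i * C ^ k) := fun i => by
      rw [hlin n i]; exact ENNReal.ofReal_le_ofReal (habsint n i)
    have hsum : ∑' i, ∫⁻ ω, (‖f n i ω‖₊ : ℝ≥0∞) ∂μ ≤ ∑' i, ENNReal.ofReal (d i * C ^ k) :=
      ENNReal.tsum_le_tsum hle
    refine ne_top_of_le_ne_top ?_ hsum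
    rw [← ENNReal.ofReal_tsum_of_nonneg (fun i => mul_nonneg (hd0 i) hCk0) hdCsum]
    exact ENNReal.ofReal_ne_top
  -- STATEMENT 1
  have S1 : ∀ n : ℤ, ∀ᵐ ω ∂μ,
      Summable fun i : IncrTupleZ k => |∏ j, (a (i.1 j) * ε (n - i.1 j) ω)| := by
    intro n
    have hBm : Measurable fun ω => ∑' i, (‖f n i ω‖₊ : ℝ≥0∞) :=
      Measurable.ennreal_tsum fun i => (hfm n i).nnnorm.coe_nnreal_ennreal
    have hBlt : ∫⁻ ω, (∑' i, (‖f n i ω‖₊ : ℝ≥0∞)) ∂μ ≠ ⊤ := by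
      rw [lintegral_tsum fun i => ((hfm n i).nnnorm.coe_nnreal_ennreal).aemeasurable]
      exact hlinsum n
    filter_upwards [ae_lt_top hBm hBlt] with ω hω
    have h1 : Summable fun i => ‖f n i ω‖₊ :=
      ENNReal.tsum_coe_ne_top_iff_summable.1 hω.ne
    have h2 : Summable fun i => |f n i ω| := by
      rw [← NNReal.summable_coe] at h1
      simpa [Real.norm_eq_abs] using h1
    exact h2

  -- STATEMENT 3 (mean)
  have S3 : ∀ n : ℤ, ∫ ω, polyForm k a ε n ω ∂μ = 0 := by
    intro n
    have e : (fun ω => polyForm k a ε n ω) = fun ω => ∑' i, f n i ω := rfl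
    rw [show ∫ ω, polyForm k a ε n ω ∂μ = ∫ ω, ∑' i, f n i ω ∂μ from by rw [e],
      integral_tsum (fun i => (hfm n i).aestronglyMeasurable) (hlinsum n)]
    have : ∀ i : IncrTupleZ k, ∫ ω, f n i ω ∂μ = 0 := hIf n
    rw [tsum_congr this, tsum_zero]
  -- pair terms
  set F : ℤ → ℤ → (IncrTupleZ k × IncrTupleZ k) → Ω → ℝ :=
    fun n m p ω => f n p.1 ω * f m p.2 ω with hFdef
  have hFm : ∀ n m p, Measurable (F n m p) := fun n m p => (hfm n p.1).mul (hfm m p.2)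
  have hFint : ∀ n m p, Integrable (F n m p) μ := by
    intro n m p
    have hpair := (myPair_integral hmeas hindep hint1 hint2 hI1 hI2
      (fun j => n - p.1.1 j) (fun j => m - p.2.1 j) (hinj n p.1) (hinj m p.2)).1
    have h2 := hpair.const_mul (c p.1 * c p.2)
    refine h2.congr (Filter.Eventually.of_forall fun ω => ?_)
    show (c p.1 * c p.2) * ((∏ j, ε (n - p.1.1 j) ω) * (∏ j, ε (m - p.2.1 j) ω)) = F n m p ω
    rw [show F n m p ω = f n p.1 ω * f m p.2 ω from rfl, hsplit n p.1 ω, hsplit m p.2 ω]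
    ring
  have hFabsint : ∀ n m p, ∫ ω, |F n m p ω| ∂μ ≤ (d p.1 * C ^ k) * (d p.2 * C ^ k) := by
    intro n m p
    have hpair := myPair_integral_abs hmeas hindep hintA hint2 hIA hI2 hC1
      (fun j => n - p.1.1 j) (fun j => m - p.2.1 j) (hinj n p.1) (hinj m p.2)
    have he : (fun ω => |F n m p ω|) = fun ω => (d p.1 * d p.2) *
        ((∏ j, |ε (n - p.1.1 j) ω|) * (∏ j, |ε (m - p.2.1 j) ω|)) := by
      funext ω
      show |f n p.1 ω * f m p.2 ω| = _
      rw [abs_mul, habs n p.1 ω, habs m p.2 ω]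
      ring
    rw [he, integral_const_mul]
    calc (d p.1 * d p.2) * ∫ ω, (∏ j, |ε (n - p.1.1 j) ω|) * (∏ j, |ε (m - p.2.1 j) ω|) ∂μ
        ≤ (d p.1 * d p.2) * C ^ (2 * k) :=
          mul_le_mul_of_nonneg_left hpair.2 (mul_nonneg (hd0 _) (hd0 _))
      _ = (d p.1 * C ^ k) * (d p.2 * C ^ k) := by
          rw [two_mul, pow_add]; ring
  have hFlin : ∀ n m p, ∫⁻ ω, (‖F n m p ω‖₊ : ℝ≥0∞) ∂μ
      ≤ ENNReal.ofReal ((d p.1 * C ^ k) * (d p.2 * C ^ k)) := by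
    intro n m p
    erw [← ofReal_integral_norm_eq_lintegral_enorm (hFint n m p)]
    refine ENNReal.ofReal_le_ofReal ?_
    calc ∫ ω, ‖F n m p ω‖ ∂μ = ∫ ω, |F n m p ω| ∂μ := by simp_rw [Real.norm_eq_abs]
      _ ≤ _ := hFabsint n m p
  have hpairsum : Summable fun p : IncrTupleZ k × IncrTupleZ k =>
      (d p.1 * C ^ k) * (d p.2 * C ^ k) := by
    have h0 : ∀ i : IncrTupleZ k, 0 ≤ d i * C ^ k := fun i => mul_nonneg (hd0 i) hCk0
    have := Summable.mul_of_nonneg (f := fun i : IncrTupleZ k => d i * C ^ k)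
      (g := fun i : IncrTupleZ k => d i * C ^ k) hdCsum hdCsum h0 h0
    exact this
  have hFlinsum : ∀ n m, ∑' p, ∫⁻ ω, (‖F n m p ω‖₊ : ℝ≥0∞) ∂μ ≠ ⊤ := by
    intro n m
    have hsum : ∑' p, ∫⁻ ω, (‖F n m p ω‖₊ : ℝ≥0∞) ∂μ
        ≤ ∑' p : IncrTupleZ k × IncrTupleZ k,
            ENNReal.ofReal ((d p.1 * C ^ k) * (d p.2 * C ^ k)) :=
      ENNReal.tsum_le_tsum (hFlin n m)
    refine ne_top_of_le_ne_top ?_ hsum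
    rw [← ENNReal.ofReal_tsum_of_nonneg
      (fun p => mul_nonneg (mul_nonneg (hd0 _) hCk0) (mul_nonneg (hd0 _) hCk0)) hpairsum]
    exact ENNReal.ofReal_ne_top
  -- STATEMENT 2
  have S2 : ∀ n : ℤ, MemLp (polyForm k a ε n) 2 μ := by
    intro n
    have hXm : Measurable (polyForm k a ε n) := by
      have e : polyForm k a ε n = fun ω => ∑' i, f n i ω := rfl
      rw [e]
      exact myMeasurable_tsum_real (hfm n)
    refine (memLp_two_iff_integrable_sq hXm.aestronglyMeasurable).2 ?_
    have hT : Integrable (fun ω => ∑' p, F n n p ω) μ :=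
      myIntegrable_tsum (hFm n n) (hFlinsum n n)
    refine hT.congr ?_
    filter_upwards [S1 n] with ω hω
    have hsf : Summable fun i => ‖f n i ω‖ := by
      simp only [Real.norm_eq_abs]; exact hω
    calc ∑' p, F n n p ω = (∑' i, f n i ω) * (∑' i, f n i ω) :=
          (tsum_mul_tsum_of_summable_norm hsf hsf).symm
      _ = polyForm k a ε n ω ^ 2 := (sq _).symm
  -- STATEMENT 5 (covariance)
  have S5 : ∀ n : ℤ, ∫ ω, polyForm k a ε n ω * polyForm k a ε 0 ω ∂μ =
      ∑' i : IncrTupleZ k, ∏ j, (a (n + i.1 j) * a (i.1 j)) := by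
    intro n
    have hae : (fun ω => polyForm k a ε n ω * polyForm k a ε 0 ω)
        =ᵐ[μ] fun ω => ∑' p, F n 0 p ω := by
      filter_upwards [S1 n, S1 0] with ω h1 h2
      have hs1 : Summable fun i => ‖f n i ω‖ := by
        simp only [Real.norm_eq_abs]; exact h1
      have hs2 : Summable fun i => ‖f 0 i ω‖ := by
        simp only [Real.norm_eq_abs]; exact h2
      exact tsum_mul_tsum_of_summable_norm hs1 hs2
    rw [integral_congr_ae hae,
      integral_tsum (fun p => (hFm n 0 p).aestronglyMeasurable) (hFlinsum n 0)]
    have hFval : ∀ p : IncrTupleZ k × IncrTupleZ k,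
        ∫ ω, F n 0 p ω ∂μ =
          if (∀ j, p.1.1 j = n + p.2.1 j) then c p.1 * c p.2 else 0 := by
      intro p
      have hpair := myPair_integral hmeas hindep hint1 hint2 hI1 hI2
        (fun j => n - p.1.1 j) (fun j => 0 - p.2.1 j) (hinj n p.1) (hinj 0 p.2)
      have he : F n 0 p = fun ω => (c p.1 * c p.2) *
          ((∏ j, ε (n - p.1.1 j) ω) * (∏ j, ε (0 - p.2.1 j) ω)) := by
        funext ω
        show f n p.1 ω * f 0 p.2 ω = _
        rw [hsplit n p.1 ω, hsplit 0 p.2 ω]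
        ring
      rw [he, integral_const_mul, hpair.2]
      have hiff : (Finset.image (fun j => n - p.1.1 j) Finset.univ
          = Finset.image (fun j => 0 - p.2.1 j) Finset.univ)
          ↔ (∀ j, p.1.1 j = n + p.2.1 j) := by
        rw [myImage_eq_iff (hanti n p.1) (hanti 0 p.2)]
        constructor
        · intro h j
          have h' : n - p.1.1 j = 0 - p.2.1 j := congrFun h j
          omega
        · intro h
          funext j
          have h' := h j
          show n - p.1.1 j = 0 - p.2.1 j
          omega
      split_ifs with himg hcond hcond
      · exact mul_one _
      · exact absurd (hiff.1 himg) hcond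
      · exact absurd (hiff.2 hcond) himg
      · exact mul_zero _
    rw [tsum_congr hFval]
    -- reindex
    set T : IncrTupleZ k → ℝ := fun i => ∏ j, (a (n + i.1 j) * a (i.1 j)) with hTdef
    have hshift : ∀ x : Function.support T, StrictMono (fun j => n + (x.1).1 j)
        ∧ ∀ j, 0 < n + (x.1).1 j := by
      rintro ⟨i, hi⟩
      have hne : T i ≠ 0 := hi
      have hfac : ∀ j : Fin k, a (n + i.1 j) * a (i.1 j) ≠ 0 := by
        intro j hz
        exact hne (Finset.prod_eq_zero (Finset.mem_univ j) hz)
      constructor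
      · intro j j' hlt
        have h' := i.2.1 hlt
        show n + i.1 j < n + i.1 j'
        omega
      · intro j
        by_contra hle
        push_neg at hle
        exact hfac j (by rw [ha0 _ hle, zero_mul])
    set ψ : Function.support T → IncrTupleZ k × IncrTupleZ k :=
      fun x => (⟨fun j => n + (x.1).1 j, (hshift x).1, (hshift x).2⟩, x.1) with hψdef
    refine tsum_eq_tsum_of_ne_zero_bij ψ ?_ ?_ ?_
    · rintro x x' hxy
      have h2 : x.1 = x'.1 := congrArg Prod.snd hxy
      exact Subtype.ext h2
    · rintro p hp
      have hp' : (if ∀ j, p.1.1 j = n + p.2.1 j then c p.1 * c p.2 else 0) ≠ 0 := hp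
      have hcond : ∀ j, p.1.1 j = n + p.2.1 j := by
        by_contra hcon
        rw [if_neg hcon] at hp'
        exact hp' rfl
      have hcc : c p.1 * c p.2 ≠ 0 := by
        intro hz
        rw [if_pos hcond, hz] at hp'
        exact hp' rfl
      have hmem : p.2 ∈ Function.support T := by
        show T p.2 ≠ 0
        have hTp : T p.2 = c p.1 * c p.2 := by
          show ∏ j, (a (n + p.2.1 j) * a (p.2.1 j)) = c p.1 * c p.2
          rw [Finset.prod_mul_distrib]
          congr 1
          exact Finset.prod_congr rfl fun j _ => by rw [← hcond j]
        rw [hTp]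
        exact hcc
      refine ⟨⟨p.2, hmem⟩, ?_⟩
      have hfst : (ψ ⟨p.2, hmem⟩).1 = p.1 :=
        Subtype.ext (funext fun j => (hcond j).symm)
      exact Prod.ext hfst rfl
    · intro x
      have hcond : ∀ j : Fin k, ((ψ x).1).1 j = n + ((ψ x).2).1 j := fun j => rfl
      have hval : (if ∀ j : Fin k, ((ψ x).1).1 j = n + ((ψ x).2).1 j
          then c (ψ x).1 * c (ψ x).2 else 0) = c (ψ x).1 * c (ψ x).2 := if_pos hcond
      refine Eq.trans hval ?_
      exact (Finset.prod_mul_distrib).symm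
  -- STATEMENT 4 (variance)
  have S4 : ∫ ω, polyForm k a ε 0 ω ^ 2 ∂μ
      = ∑' i : IncrTupleZ k, ∏ j, (a (i.1 j)) ^ 2 := by
    have he : (fun ω => polyForm k a ε 0 ω ^ 2)
        = fun ω => polyForm k a ε 0 ω * polyForm k a ε 0 ω := by
      funext ω; rw [sq]
    rw [show ∫ ω, polyForm k a ε 0 ω ^ 2 ∂μ
        = ∫ ω, polyForm k a ε 0 ω * polyForm k a ε 0 ω ∂μ from by rw [he], S5 0]
    exact tsum_congr fun i => Finset.prod_congr rfl fun j _ => by rw [zero_add, ← sq]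
  exact ⟨S1, S2, S3, S4, S5⟩
end

section
/- Let (ε_i)_{i∈ℤ} be i.i.d. real random variables with E[ε_0] = 0, E[ε_0^2] = 1 and E[|ε_0|^5] < ∞. Let k ≥ 1 and (a_i)_{i≥1} with ∑_i |a_i| < ∞ (a_i = 0 for i ≤ 0), let X(n) be the order-k multilinear polynomial-form process with coefficients (a_i), and suppose its autocovariance γ(n) = E[X(n)X(0)] satisfies ∑_{n ∈ ℤ} |γ(n)| < ∞. Then there exists a constant C > 0 such that for every integer M ≥ 1, E[(∑_{n=1}^M X(n))^4] ≤ C · M^2. -/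
set_option maxHeartbeats 1000000
open MeasureTheory ProbabilityTheory
open scoped ENNReal NNReal

section Aux
variable {Ω : Type*} [MeasurableSpace Ω] {μ : Measure Ω} [IsProbabilityMeasure μ]

/-- Product of finitely many independent integrable random variables is integrable,
with integral the product of integrals. -/
lemma indep_prod_integral (f : ℤ → Ω → ℝ)
    (hind : iIndepFun f μ)
    (hm : ∀ m, Measurable (f m)) (hint : ∀ m, Integrable (f m) μ) (T : Finset ℤ) :
    Integrable (fun ω => ∏ m ∈ T, f m ω) μ ∧
      ∫ ω, ∏ m ∈ T, f m ω ∂μ = ∏ m ∈ T, ∫ ω, f m ω ∂μ := by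
  classical
  induction T using Finset.induction_on with
  | empty => simp
  | @insert i s hi ih =>
    have hfun : (fun ω => ∏ m ∈ insert i s, f m ω)
        = fun ω => f i ω * ∏ m ∈ s, f m ω := by
      funext ω; exact Finset.prod_insert hi
    have hprodfun : (∏ j ∈ s, f j) = fun ω => ∏ m ∈ s, f m ω := by
      funext ω; exact Finset.prod_apply ω s f
    have hIndep : IndepFun (f i) (fun ω => ∏ m ∈ s, f m ω) μ := by
      rw [← hprodfun]
      exact (hind.indepFun_finsetProd_of_notMem hm hi).symm
    have hInt : Integrable (fun ω => f i ω * ∏ m ∈ s, f m ω) μ :=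
      hIndep.integrable_mul (hint i) ih.1
    constructor
    · rw [hfun]; exact hInt
    · rw [hfun]
      have := hIndep.integral_mul_eq_mul_integral (hint i).aestronglyMeasurable ih.1.aestronglyMeasurable
      simp only [Pi.mul_apply] at this
      calc ∫ ω, f i ω * ∏ m ∈ s, f m ω ∂μ
          = (∫ ω, f i ω ∂μ) * ∫ ω, ∏ m ∈ s, f m ω ∂μ := this
        _ = ∏ m ∈ insert i s, ∫ ω, f m ω ∂μ := by rw [ih.2, Finset.prod_insert hi]

lemma abs_pow_le (x : ℝ) (p : ℕ) (hp : p ≤ 5) : |x| ^ p ≤ 1 + |x| ^ (5 : ℕ) := by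
  rcases le_total (|x|) 1 with h | h
  · have : |x| ^ p ≤ 1 := pow_le_one₀ (abs_nonneg x) h
    have h5 : 0 ≤ |x| ^ (5:ℕ) := pow_nonneg (abs_nonneg x) 5
    linarith
  · have : |x| ^ p ≤ |x| ^ (5:ℕ) := pow_le_pow_right₀ h hp
    linarith

lemma integrable_abs_pow {g : Ω → ℝ} (hg : Measurable g)
    (h5 : Integrable (fun ω => |g ω| ^ (5 : ℕ)) μ) {p : ℕ} (hp : p ≤ 5) :
    Integrable (fun ω => |g ω| ^ p) μ := by
  refine Integrable.mono' ((integrable_const (1:ℝ)).add h5)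
    ((hg.abs.pow_const p).aestronglyMeasurable) (ae_of_all _ fun ω => ?_)
  rw [Real.norm_eq_abs, abs_of_nonneg (pow_nonneg (abs_nonneg _) _)]
  exact abs_pow_le _ _ hp

lemma integrable_pow {g : Ω → ℝ} (hg : Measurable g)
    (h5 : Integrable (fun ω => |g ω| ^ (5 : ℕ)) μ) {p : ℕ} (hp : p ≤ 5) :
    Integrable (fun ω => g ω ^ p) μ := by
  refine Integrable.mono' (integrable_abs_pow hg h5 hp)
    ((hg.pow_const p).aestronglyMeasurable) (ae_of_all _ fun ω => ?_)
  rw [Real.norm_eq_abs, abs_pow]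

/-- The propositional covering lemma on 4 vertices. -/
lemma cover_cases {A B C E F G : Prop} (h0 : A ∨ B ∨ C) (h1 : A ∨ E ∨ F)
    (h2 : B ∨ E ∨ G) (h3 : C ∨ F ∨ G) :
    (A ∧ G) ∨ (B ∧ F) ∨ (C ∧ E) ∨ (A ∧ B ∧ C) ∨ (A ∧ E ∧ F) ∨ (B ∧ E ∧ G) ∨ (C ∧ F ∧ G) := by
  tauto

end Aux

section Count
variable (s D : Finset ℤ)

/-- Counting: pairs-of-pairs constraint. -/
lemma card_match (α β γ δ : Fin 4) (hcov : ∀ l : Fin 4, l = α ∨ l = β ∨ l = γ ∨ l = δ) :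
    ((Fintype.piFinset (fun _ : Fin 4 => s)).filter
        (fun p => p α - p β ∈ D ∧ p γ - p δ ∈ D)).card ≤ s.card ^ 2 * D.card ^ 2 := by
  classical
  have h := Finset.card_le_card_of_injOn
    (f := fun p : Fin 4 → ℤ => ((p α, p α - p β), (p γ, p γ - p δ)))
    (s := (Fintype.piFinset (fun _ : Fin 4 => s)).filter (fun p => p α - p β ∈ D ∧ p γ - p δ ∈ D)) (t := (s ×ˢ D) ×ˢ (s ×ˢ D)) ?_ ?_
  · calc _ ≤ ((s ×ˢ D) ×ˢ (s ×ˢ D)).card := h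
      _ = s.card ^ 2 * D.card ^ 2 := by
        simp [Finset.card_product]; ring
  · intro p hp
    simp only [Finset.mem_coe, Finset.mem_filter, Fintype.mem_piFinset] at hp
    simp only [Finset.mem_coe, Finset.mem_product]
    exact ⟨⟨hp.1 α, hp.2.1⟩, hp.1 γ, hp.2.2⟩
  · intro p hp q hq hpq
    simp only [Prod.mk.injEq] at hpq
    obtain ⟨⟨h1, h2⟩, h3, h4⟩ := hpq
    funext l
    rcases hcov l with rfl | rfl | rfl | rfl
    · exact h1
    · omega
    · exact h3
    · omega

/-- Counting: star constraint. -/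
lemma card_star (α β γ δ : Fin 4) (hcov : ∀ l : Fin 4, l = α ∨ l = β ∨ l = γ ∨ l = δ) :
    ((Fintype.piFinset (fun _ : Fin 4 => s)).filter
        (fun p => p α - p β ∈ D ∧ p α - p γ ∈ D ∧ p α - p δ ∈ D)).card
      ≤ s.card * D.card ^ 3 := by
  classical
  have h := Finset.card_le_card_of_injOn
    (f := fun p : Fin 4 → ℤ => (p α, (p α - p β, p α - p γ, p α - p δ)))
    (s := (Fintype.piFinset (fun _ : Fin 4 => s)).filter (fun p => p α - p β ∈ D ∧ p α - p γ ∈ D ∧ p α - p δ ∈ D)) (t := s ×ˢ (D ×ˢ D ×ˢ D)) ?_ ?_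
  · calc _ ≤ (s ×ˢ (D ×ˢ D ×ˢ D)).card := h
      _ = s.card * D.card ^ 3 := by
        rw [Finset.card_product, Finset.card_product, Finset.card_product]; ring
  · intro p hp
    simp only [Finset.mem_coe, Finset.mem_filter, Fintype.mem_piFinset] at hp
    simp only [Finset.mem_coe, Finset.mem_product]
    exact ⟨hp.1 α, hp.2.1, hp.2.2.1, hp.2.2.2⟩
  · intro p hp q hq hpq
    simp only [Prod.mk.injEq] at hpq
    obtain ⟨h1, h2, h3, h4⟩ := hpq
    funext l
    rcases hcov l with rfl | rfl | rfl | rfl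
    · exact h1
    · omega
    · omega
    · omega

end Count

section Core
open Finset

lemma core_bound {Ω : Type*} [MeasurableSpace Ω] {μ : Measure Ω} [IsProbabilityMeasure μ]
    (ε : ℤ → Ω → ℝ) (hmeas : ∀ i, Measurable (ε i))
    (hindep : iIndepFun ε μ)
    (hident : ∀ i, IdentDistrib (ε i) (ε 0) μ μ)
    (hmean : ∫ ω, ε 0 ω ∂μ = 0)
    (hmom5 : Integrable (fun ω => |ε 0 ω| ^ (5 : ℕ)) μ)
    (k : ℕ) (hk : 0 < k) (v : Fin k → ℤ) (hv : Function.Injective v) (M : ℕ) (hM : 1 ≤ M) :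
    Integrable (fun ω => (∑ n ∈ Finset.Icc (1:ℤ) (M:ℤ), ∏ j, ε (n - v j) ω) ^ 4) μ ∧
    ∫ ω, (∑ n ∈ Finset.Icc (1:ℤ) (M:ℤ), ∏ j, ε (n - v j) ω) ^ 4 ∂μ ≤
      (1 + ∫ ω, |ε 0 ω| ^ (5:ℕ) ∂μ) ^ (4 * k) * (3 * (k:ℝ)^4 + 4 * (k:ℝ)^6) * (M:ℝ) ^ 2 := by
  classical
  set s : Finset ℤ := Finset.Icc (1:ℤ) (M:ℤ) with hs
  have hscard : s.card = M := by rw [hs, Int.card_Icc]; simp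
  set D : Finset ℤ := Finset.image (fun q : Fin k × Fin k => v q.1 - v q.2) Finset.univ with hD
  have hDcard : D.card ≤ k ^ 2 := by
    refine le_trans Finset.card_image_le ?_
    simp [sq]
  have hDsymm : ∀ l l' : ℤ, l - l' ∈ D → l' - l ∈ D := by
    intro l l' h
    rw [hD, Finset.mem_image] at h ⊢
    obtain ⟨⟨j, j'⟩, -, hq⟩ := h
    have hq' : v j - v j' = l - l' := hq
    exact ⟨(j', j), Finset.mem_univ _, show v j' - v j = l' - l by omega⟩
  set P : Finset (Fin 4 → ℤ) := Fintype.piFinset (fun _ : Fin 4 => s) with hP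
  set e : (Fin 4 → ℤ) → Fin 4 × Fin k → ℤ := fun p q => p q.1 - v q.2 with he
  set T : (Fin 4 → ℤ) → Finset ℤ := fun p => Finset.image (e p) Finset.univ with hT
  set g : (Fin 4 → ℤ) → ℤ → ℕ := fun p m => (Finset.univ.filter (fun q => e p q = m)).card
    with hg
  have hg4 : ∀ p m, g p m ≤ 4 := by
    intro p m
    have := Finset.card_le_card_of_injOn (f := fun q : Fin 4 × Fin k => q.1)
      (s := Finset.univ.filter (fun q => e p q = m)) (t := Finset.univ)
      (fun q _ => Finset.mem_univ _) ?_
    · simpa [g] using this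
    · intro q hq q' hq' hfst
      have hfst' : q.1 = q'.1 := hfst
      simp only [Finset.coe_filter, Set.mem_setOf_eq, Finset.mem_univ, true_and, he] at hq hq'
      have : v q.2 = v q'.2 := by rw [hfst'] at hq; omega
      exact Prod.ext hfst' (hv this)
  have hTcard : ∀ p, (T p).card ≤ 4 * k := by
    intro p
    refine le_trans Finset.card_image_le ?_
    simp
  set m5 : ℝ := ∫ ω, |ε 0 ω| ^ (5:ℕ) ∂μ with hm5def
  have hm5 : 0 ≤ m5 := integral_nonneg fun ω => pow_nonneg (abs_nonneg _) _
  set c : ℕ → ℝ := fun q => ∫ ω, ε 0 ω ^ q ∂μ with hc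
  have habs5 : ∀ (m : ℤ), Integrable (fun ω => |ε m ω| ^ (5:ℕ)) μ := by
    intro m
    have := ((hident m).comp (u := fun x : ℝ => |x| ^ (5:ℕ))
      ((measurable_id.abs).pow_const 5)).integrable_iff
    exact this.2 hmom5
  have hIpow : ∀ (m : ℤ) (q : ℕ), q ≤ 5 → Integrable (fun ω => ε m ω ^ q) μ := by
    intro m q hq
    exact integrable_pow (hmeas m) (habs5 m) hq
  have hceq : ∀ (m : ℤ) (q : ℕ), ∫ ω, ε m ω ^ q ∂μ = c q := by
    intro m q
    exact ((hident m).comp (u := fun x : ℝ => x ^ q) (measurable_id.pow_const q)).integral_eq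
  have hcabs : ∀ q : ℕ, q ≤ 5 → |c q| ≤ 1 + m5 := by
    intro q hq
    have h1 : |c q| ≤ ∫ ω, |ε 0 ω ^ q| ∂μ := by
      calc |c q| = ‖∫ ω, ε 0 ω ^ q ∂μ‖ := rfl
        _ ≤ ∫ ω, ‖ε 0 ω ^ q‖ ∂μ := norm_integral_le_integral_norm _
        _ = ∫ ω, |ε 0 ω ^ q| ∂μ := by simp [Real.norm_eq_abs]
    have h2 : ∫ ω, |ε 0 ω ^ q| ∂μ = ∫ ω, |ε 0 ω| ^ q ∂μ := by
      congr 1; funext ω; exact abs_pow _ _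
    have h3 : ∫ ω, |ε 0 ω| ^ q ∂μ ≤ ∫ ω, (1 + |ε 0 ω| ^ (5:ℕ)) ∂μ := by
      refine integral_mono (integrable_abs_pow (hmeas 0) hmom5 hq)
        ((integrable_const 1).add hmom5) (fun ω => abs_pow_le _ _ hq)
    have h4 : ∫ ω, (1 + |ε 0 ω| ^ (5:ℕ)) ∂μ = 1 + m5 := by
      rw [integral_add (integrable_const 1) hmom5]
      simp [hm5def]
    calc |c q| ≤ ∫ ω, |ε 0 ω ^ q| ∂μ := h1
      _ = ∫ ω, |ε 0 ω| ^ q ∂μ := h2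
      _ ≤ ∫ ω, (1 + |ε 0 ω| ^ (5:ℕ)) ∂μ := h3
      _ = 1 + m5 := h4
  -- product rewrite
  have hprod_rw : ∀ (p : Fin 4 → ℤ) (ω : Ω),
      (∏ l, ∏ j, ε (p l - v j) ω) = ∏ m ∈ T p, ε m ω ^ g p m := by
    intro p ω
    have h1 : (∏ l, ∏ j, ε (p l - v j) ω) = ∏ q : Fin 4 × Fin k, ε (e p q) ω := by
      rw [Fintype.prod_prod_type (f := fun q : Fin 4 × Fin k => ε (e p q) ω)]
    rw [h1, ← Finset.prod_fiberwise_of_maps_to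
      (g := e p) (t := T p) (fun q _ => Finset.mem_image_of_mem _ (Finset.mem_univ q))
      (fun q => ε (e p q) ω)]
    refine Finset.prod_congr rfl fun m hm => ?_
    calc ∏ q ∈ Finset.univ.filter (fun q => e p q = m), ε (e p q) ω
        = ∏ q ∈ Finset.univ.filter (fun q => e p q = m), ε m ω :=
          Finset.prod_congr rfl (fun q hq => by rw [(Finset.mem_filter.1 hq).2])
      _ = ε m ω ^ g p m := Finset.prod_const _
  -- per-p independence / integrability / integral value
  have hpow_indep : ∀ p : Fin 4 → ℤ,
      iIndepFun (fun m ω => ε m ω ^ g p m) μ := by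
    intro p
    exact hindep.comp (fun m x => x ^ g p m) (fun m => measurable_id.pow_const _)
  have hint_p : ∀ p : Fin 4 → ℤ, Integrable (fun ω => ∏ m ∈ T p, ε m ω ^ g p m) μ := by
    intro p
    exact (indep_prod_integral _ (hpow_indep p) (fun m => (hmeas m).pow_const _)
      (fun m => hIpow m _ (le_trans (hg4 p m) (by norm_num))) (T p)).1
  set w : (Fin 4 → ℤ) → ℝ := fun p => ∏ m ∈ T p, c (g p m) with hw
  have hval_p : ∀ p : Fin 4 → ℤ, ∫ ω, ∏ m ∈ T p, ε m ω ^ g p m ∂μ = w p := by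
    intro p
    rw [(indep_prod_integral _ (hpow_indep p) (fun m => (hmeas m).pow_const _)
      (fun m => hIpow m _ (le_trans (hg4 p m) (by norm_num))) (T p)).2]
    exact Finset.prod_congr rfl fun m _ => hceq m _
  -- expansion
  have hexp : ∀ ω, (∑ n ∈ s, ∏ j, ε (n - v j) ω) ^ 4
      = ∑ p ∈ P, ∏ m ∈ T p, ε m ω ^ g p m := by
    intro ω
    have h1 : (∑ n ∈ s, ∏ j, ε (n - v j) ω) ^ 4
        = ∏ _l : Fin 4, (∑ n ∈ s, ∏ j, ε (n - v j) ω) := by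
      simp [Finset.prod_const, Finset.card_univ]
    rw [h1, Finset.prod_univ_sum]
    exact Finset.sum_congr rfl fun p _ => hprod_rw p ω
  have hIntBig : Integrable (fun ω => (∑ n ∈ s, ∏ j, ε (n - v j) ω) ^ 4) μ := by
    have : (fun ω => (∑ n ∈ s, ∏ j, ε (n - v j) ω) ^ 4)
        = fun ω => ∑ p ∈ P, ∏ m ∈ T p, ε m ω ^ g p m := funext hexp
    rw [this]
    exact integrable_finset_sum P (fun p _ => hint_p p)
  refine ⟨hIntBig, ?_⟩
  have hval : ∫ ω, (∑ n ∈ s, ∏ j, ε (n - v j) ω) ^ 4 ∂μ = ∑ p ∈ P, w p := by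
    calc ∫ ω, (∑ n ∈ s, ∏ j, ε (n - v j) ω) ^ 4 ∂μ
        = ∫ ω, ∑ p ∈ P, ∏ m ∈ T p, ε m ω ^ g p m ∂μ := by
          exact integral_congr_ae (ae_of_all _ hexp)
      _ = ∑ p ∈ P, ∫ ω, ∏ m ∈ T p, ε m ω ^ g p m ∂μ :=
          integral_finset_sum P (fun p _ => hint_p p)
      _ = ∑ p ∈ P, w p := Finset.sum_congr rfl fun p _ => hval_p p
  set cover : (Fin 4 → ℤ) → Prop := fun p => ∀ l, ∃ l', l' ≠ l ∧ p l - p l' ∈ D with hcover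
  -- vanishing
  have hvanish : ∀ p : Fin 4 → ℤ, ¬ cover p → w p = 0 := by
    intro p hp
    simp only [hcover] at hp
    push_neg at hp
    obtain ⟨l, hl⟩ := hp
    set j0 : Fin k := ⟨0, hk⟩ with hj0
    set m0 : ℤ := p l - v j0 with hm0
    have hm0mem : m0 ∈ T p := Finset.mem_image_of_mem _ (Finset.mem_univ (l, j0))
    have hgone : g p m0 = 1 := by
      have hfe : (Finset.univ.filter (fun q : Fin 4 × Fin k => e p q = m0)) = {(l, j0)} := by
        ext q
        simp only [Finset.mem_filter, Finset.mem_univ, true_and, Finset.mem_singleton]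
        constructor
        · intro hq
          have hq2 : p q.1 - v q.2 = p l - v j0 := hq
          by_cases hql : q.1 = l
          · have : v q.2 = v j0 := by rw [hql] at hq2; omega
            exact Prod.ext hql (hv this)
          · exfalso
            have hmemD : p l - p q.1 ∈ D := by
              rw [hD, Finset.mem_image]
              refine ⟨(j0, q.2), Finset.mem_univ _, ?_⟩
              show v j0 - v q.2 = p l - p q.1
              omega
            exact (hl q.1 hql) hmemD
        · intro hq; rw [hq]
      simp only [hg, hfe, Finset.card_singleton]
    refine Finset.prod_eq_zero hm0mem ?_
    rw [hgone]
    simpa [hc] using hmean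
  set B : ℝ := (1 + m5) ^ (4 * k) with hB
  have hBnn : (0:ℝ) ≤ B := pow_nonneg (by linarith) _
  have hwbound : ∀ p : Fin 4 → ℤ, |w p| ≤ B := by
    intro p
    show |∏ m ∈ T p, c (g p m)| ≤ B
    calc |∏ m ∈ T p, c (g p m)| = ∏ m ∈ T p, |c (g p m)| := Finset.abs_prod _ _
      _ ≤ ∏ _m ∈ T p, (1 + m5) := Finset.prod_le_prod (fun _ _ => abs_nonneg _)
          (fun m _ => hcabs _ (le_trans (hg4 p m) (by norm_num)))
      _ = (1 + m5) ^ (T p).card := Finset.prod_const _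
      _ ≤ B := by
          rw [hB]
          exact pow_le_pow_right₀ (by linarith) (hTcard p)
  -- counting
  have hsym : ∀ (p : Fin 4 → ℤ) (l l' : Fin 4), p l - p l' ∈ D → p l' - p l ∈ D :=
    fun p l l' h => hDsymm _ _ h
  set F1 := P.filter (fun p => p 0 - p 1 ∈ D ∧ p 2 - p 3 ∈ D) with hF1
  set F2 := P.filter (fun p => p 0 - p 2 ∈ D ∧ p 1 - p 3 ∈ D) with hF2
  set F3 := P.filter (fun p => p 0 - p 3 ∈ D ∧ p 1 - p 2 ∈ D) with hF3
  set S0 := P.filter (fun p => p 0 - p 1 ∈ D ∧ p 0 - p 2 ∈ D ∧ p 0 - p 3 ∈ D) with hS0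
  set S1 := P.filter (fun p => p 1 - p 0 ∈ D ∧ p 1 - p 2 ∈ D ∧ p 1 - p 3 ∈ D) with hS1
  set S2 := P.filter (fun p => p 2 - p 0 ∈ D ∧ p 2 - p 1 ∈ D ∧ p 2 - p 3 ∈ D) with hS2
  set S3 := P.filter (fun p => p 3 - p 0 ∈ D ∧ p 3 - p 1 ∈ D ∧ p 3 - p 2 ∈ D) with hS3
  have hsub : P.filter cover ⊆ F1 ∪ F2 ∪ F3 ∪ S0 ∪ S1 ∪ S2 ∪ S3 := by
    intro p hp
    rw [Finset.mem_filter] at hp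
    obtain ⟨hpP, hpc⟩ := hp
    simp only [hcover] at hpc
    have getname : ∀ l : Fin 4, ∃ l', l' ≠ l ∧ p l - p l' ∈ D := hpc
    have h0 : p 0 - p 1 ∈ D ∨ p 0 - p 2 ∈ D ∨ p 0 - p 3 ∈ D := by
      obtain ⟨l', hne, hmem⟩ := getname 0
      fin_cases l'
      · simp at hne
      · exact Or.inl hmem
      · exact Or.inr (Or.inl hmem)
      · exact Or.inr (Or.inr hmem)
    have h1 : p 0 - p 1 ∈ D ∨ p 1 - p 2 ∈ D ∨ p 1 - p 3 ∈ D := by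
      obtain ⟨l', hne, hmem⟩ := getname 1
      fin_cases l'
      · exact Or.inl (hsym p 1 0 hmem)
      · simp at hne
      · exact Or.inr (Or.inl hmem)
      · exact Or.inr (Or.inr hmem)
    have h2 : p 0 - p 2 ∈ D ∨ p 1 - p 2 ∈ D ∨ p 2 - p 3 ∈ D := by
      obtain ⟨l', hne, hmem⟩ := getname 2
      fin_cases l'
      · exact Or.inl (hsym p 2 0 hmem)
      · exact Or.inr (Or.inl (hsym p 2 1 hmem))
      · simp at hne
      · exact Or.inr (Or.inr hmem)
    have h3 : p 0 - p 3 ∈ D ∨ p 1 - p 3 ∈ D ∨ p 2 - p 3 ∈ D := by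
      obtain ⟨l', hne, hmem⟩ := getname 3
      fin_cases l'
      · exact Or.inl (hsym p 3 0 hmem)
      · exact Or.inr (Or.inl (hsym p 3 1 hmem))
      · exact Or.inr (Or.inr (hsym p 3 2 hmem))
      · simp at hne
    have hcc := cover_cases h0 h1 h2 h3
    simp only [Finset.mem_union, hF1, hF2, hF3, hS0, hS1, hS2, hS3, Finset.mem_filter]
    rcases hcc with ⟨hA, hG⟩ | ⟨hB', hF⟩ | ⟨hC, hE⟩ | ⟨hA, hB', hC⟩ | ⟨hA, hE, hF⟩
      | ⟨hB', hE, hG⟩ | ⟨hC, hF, hG⟩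
    · exact Or.inl (Or.inl (Or.inl (Or.inl (Or.inl (Or.inl ⟨hpP, hA, hG⟩)))))
    · exact Or.inl (Or.inl (Or.inl (Or.inl (Or.inl (Or.inr ⟨hpP, hB', hF⟩)))))
    · exact Or.inl (Or.inl (Or.inl (Or.inl (Or.inr ⟨hpP, hC, hE⟩))))
    · exact Or.inl (Or.inl (Or.inl (Or.inr ⟨hpP, hA, hB', hC⟩)))
    · exact Or.inl (Or.inl (Or.inr ⟨hpP, hsym p 0 1 hA, hE, hF⟩))
    · exact Or.inl (Or.inr ⟨hpP, hsym p 0 2 hB', hsym p 1 2 hE, hG⟩)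
    · exact Or.inr ⟨hpP, hsym p 0 3 hC, hsym p 1 3 hF, hsym p 2 3 hG⟩
  have hDc2 : D.card ^ 2 ≤ (k ^ 2) ^ 2 := Nat.pow_le_pow_left hDcard 2
  have hDc3 : D.card ^ 3 ≤ (k ^ 2) ^ 3 := Nat.pow_le_pow_left hDcard 3
  have hmatch : ∀ F : Finset (Fin 4 → ℤ), F.card ≤ s.card ^ 2 * D.card ^ 2 →
      F.card ≤ M ^ 2 * (k ^ 2) ^ 2 := by
    intro F h
    rw [hscard] at h
    exact le_trans h (Nat.mul_le_mul_left _ hDc2)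
  have hstar : ∀ F : Finset (Fin 4 → ℤ), F.card ≤ s.card * D.card ^ 3 →
      F.card ≤ M * (k ^ 2) ^ 3 := by
    intro F h
    rw [hscard] at h
    exact le_trans h (Nat.mul_le_mul_left _ hDc3)
  have hc1 : F1.card ≤ M ^ 2 * (k ^ 2) ^ 2 := hmatch _ (card_match s D 0 1 2 3 (by decide))
  have hc2 : F2.card ≤ M ^ 2 * (k ^ 2) ^ 2 := hmatch _ (card_match s D 0 2 1 3 (by decide))
  have hc3 : F3.card ≤ M ^ 2 * (k ^ 2) ^ 2 := hmatch _ (card_match s D 0 3 1 2 (by decide))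
  have hc4 : S0.card ≤ M * (k ^ 2) ^ 3 := hstar _ (card_star s D 0 1 2 3 (by decide))
  have hc5 : S1.card ≤ M * (k ^ 2) ^ 3 := hstar _ (card_star s D 1 0 2 3 (by decide))
  have hc6 : S2.card ≤ M * (k ^ 2) ^ 3 := hstar _ (card_star s D 2 0 1 3 (by decide))
  have hc7 : S3.card ≤ M * (k ^ 2) ^ 3 := hstar _ (card_star s D 3 0 1 2 (by decide))
  have hcount : (P.filter cover).card ≤ 3 * (M ^ 2 * (k ^ 2) ^ 2) + 4 * (M * (k ^ 2) ^ 3) := by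
    have hu : (F1 ∪ F2 ∪ F3 ∪ S0 ∪ S1 ∪ S2 ∪ S3).card
        ≤ F1.card + F2.card + F3.card + S0.card + S1.card + S2.card + S3.card := by
      calc (F1 ∪ F2 ∪ F3 ∪ S0 ∪ S1 ∪ S2 ∪ S3).card
          ≤ (F1 ∪ F2 ∪ F3 ∪ S0 ∪ S1 ∪ S2).card + S3.card := Finset.card_union_le _ _
        _ ≤ ((F1 ∪ F2 ∪ F3 ∪ S0 ∪ S1).card + S2.card) + S3.card := by
            gcongr; exact Finset.card_union_le _ _
        _ ≤ (((F1 ∪ F2 ∪ F3 ∪ S0).card + S1.card) + S2.card) + S3.card := by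
            gcongr; exact Finset.card_union_le _ _
        _ ≤ ((((F1 ∪ F2 ∪ F3).card + S0.card) + S1.card) + S2.card) + S3.card := by
            gcongr; exact Finset.card_union_le _ _
        _ ≤ (((((F1 ∪ F2).card + F3.card) + S0.card) + S1.card) + S2.card) + S3.card := by
            gcongr; exact Finset.card_union_le _ _
        _ ≤ ((((((F1.card + F2.card) + F3.card) + S0.card) + S1.card) + S2.card) + S3.card) := by
            gcongr; exact Finset.card_union_le _ _
    have := le_trans (Finset.card_le_card hsub) hu
    omega
  -- final estimate
  rw [hval]
  have hMM : (M:ℝ) ≤ (M:ℝ) ^ 2 := by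
    have h1 : (1:ℝ) ≤ (M:ℝ) := by exact_mod_cast hM
    nlinarith
  calc ∑ p ∈ P, w p
      = ∑ p ∈ P.filter cover, w p :=
        (Finset.sum_filter_of_ne (fun p _ h => by_contra fun hcc => h (hvanish p hcc))).symm
    _ ≤ ∑ p ∈ P.filter cover, B :=
        Finset.sum_le_sum (fun p _ => le_trans (le_abs_self _) (hwbound p))
    _ = ((P.filter cover).card : ℝ) * B := by rw [Finset.sum_const, nsmul_eq_mul]
    _ ≤ ((3 * (M ^ 2 * (k ^ 2) ^ 2) + 4 * (M * (k ^ 2) ^ 3) : ℕ) : ℝ) * B := by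
        exact mul_le_mul_of_nonneg_right (by exact_mod_cast hcount) hBnn
    _ ≤ B * (3 * (k:ℝ) ^ 4 + 4 * (k:ℝ) ^ 6) * (M:ℝ) ^ 2 := by
        push_cast
        calc (3 * ((M:ℝ) ^ 2 * ((k:ℝ) ^ 2) ^ 2) + 4 * ((M:ℝ) * ((k:ℝ) ^ 2) ^ 3)) * B
            ≤ (3 * ((M:ℝ) ^ 2 * ((k:ℝ) ^ 2) ^ 2) + 4 * ((M:ℝ) ^ 2 * ((k:ℝ) ^ 2) ^ 3)) * B := by
              gcongr
          _ = B * (3 * (k:ℝ) ^ 4 + 4 * (k:ℝ) ^ 6) * (M:ℝ) ^ 2 := by ring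

end Core


attribute [reducible] IncrTupleZ

instance IncrTupleZ.countable (k : ℕ) : Countable (IncrTupleZ k) :=
  inferInstanceAs (Countable {f : Fin k → ℤ // StrictMono f ∧ ∀ j, 0 < f j})

lemma coeff_sum_bound (k : ℕ) (a : ℤ → ℝ) (ha : Summable fun i : ℤ => |a i|)
    (u : Finset (IncrTupleZ k)) :
    ∑ i ∈ u, ∏ j, |a (i.1 j)| ≤ (∑' i : ℤ, |a i|) ^ k := by
  classical
  set t : Finset ℤ := u.biUnion (fun i => Finset.image i.1 Finset.univ) with ht
  have h1 : ∑ i ∈ u, ∏ j, |a (i.1 j)| = ∑ f ∈ u.image Subtype.val, ∏ j, |a (f j)| := by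
    rw [Finset.sum_image (fun x _ y _ hxy => Subtype.ext hxy)]
  have h2 : u.image Subtype.val ⊆ Fintype.piFinset (fun _ : Fin k => t) := by
    intro f hf
    rw [Finset.mem_image] at hf
    obtain ⟨i, hi, rfl⟩ := hf
    rw [Fintype.mem_piFinset]
    intro j
    exact Finset.mem_biUnion.2 ⟨i, hi, Finset.mem_image_of_mem _ (Finset.mem_univ j)⟩
  rw [h1]
  calc ∑ f ∈ u.image Subtype.val, ∏ j, |a (f j)|
      ≤ ∑ f ∈ Fintype.piFinset (fun _ : Fin k => t), ∏ j, |a (f j)| :=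
        Finset.sum_le_sum_of_subset_of_nonneg h2
          (fun f _ _ => Finset.prod_nonneg fun j _ => abs_nonneg _)
    _ = ∏ _j : Fin k, ∑ m ∈ t, |a m| := by rw [Finset.prod_univ_sum]
    _ ≤ ∏ _j : Fin k, ∑' m : ℤ, |a m| := Finset.prod_le_prod
        (fun _ _ => Finset.sum_nonneg fun m _ => abs_nonneg _)
        (fun _ _ => Summable.sum_le_tsum t (fun m _ => abs_nonneg _) ha)
    _ = (∑' m : ℤ, |a m|) ^ k := by
        rw [Finset.prod_const, Finset.card_univ, Fintype.card_fin]

lemma nnnorm_pow4 (x : ℝ) : ((‖x‖₊ : ℝ≥0∞)) ^ (4:ℕ) = ENNReal.ofReal (x ^ 4) := by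
  rw [← enorm_eq_nnnorm, Real.enorm_eq_ofReal_abs, ← ENNReal.ofReal_pow (abs_nonneg _), ← abs_pow,
    abs_of_nonneg (by positivity : (0:ℝ) ≤ x ^ 4)]

lemma eLpNorm_four_le {Ω : Type*} [MeasurableSpace Ω] {μ : Measure Ω}
    {f : Ω → ℝ} {R : ℝ}
    (hint : Integrable (fun ω => f ω ^ 4) μ) (hb : ∫ ω, f ω ^ 4 ∂μ ≤ R) :
    eLpNorm f 4 μ ≤ ENNReal.ofReal R ^ ((4:ℝ)⁻¹) := by
  rw [eLpNorm_eq_lintegral_rpow_enorm_toReal (by norm_num) (by norm_num)]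
  have h0 : ((4:ℝ≥0∞)).toReal = (4:ℝ) := by norm_num
  rw [h0]
  have h1 : ∀ ω, ‖f ω‖ₑ ^ (4:ℝ) = ENNReal.ofReal (f ω ^ 4) := by
    intro ω
    rw [show ((4:ℝ)) = ((4:ℕ):ℝ) by norm_num, ENNReal.rpow_natCast]
    exact nnnorm_pow4 _
  rw [lintegral_congr h1]
  rw [← ofReal_integral_eq_lintegral_ofReal hint (ae_of_all _ fun ω => by positivity)]
  rw [show (1 / (4:ℝ)) = (4:ℝ)⁻¹ by norm_num]
  exact ENNReal.rpow_le_rpow (ENNReal.ofReal_le_ofReal hb) (by norm_num)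

/-- fourth-moment bound for partial sums of a short-range dependent
multilinear polynomial-form process with absolutely summable coefficients, driven by
i.i.d. noise with mean 0, variance 1 and finite fifth absolute moment:
`E[(∑_{n=1}^M X(n))^4] ≤ C M^2`. -/
theorem statement12 {Ω : Type*} [MeasurableSpace Ω] (μ : Measure Ω) [IsProbabilityMeasure μ]
    (ε : ℤ → Ω → ℝ) (hmeas : ∀ i, Measurable (ε i))
    (hindep : iIndepFun ε μ)
    (hident : ∀ i, IdentDistrib (ε i) (ε 0) μ μ)
    (hmean : ∫ ω, ε 0 ω ∂μ = 0) (hvar : ∫ ω, (ε 0 ω) ^ 2 ∂μ = 1)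
    (hmom5 : Integrable (fun ω => |ε 0 ω| ^ (5 : ℕ)) μ)
    (k : ℕ) (hk : 1 ≤ k) (a : ℤ → ℝ)
    (ha0 : ∀ i : ℤ, i ≤ 0 → a i = 0) (ha : Summable fun i : ℤ => |a i|)
    (X : ℤ → Ω → ℝ) (hX : X = polyForm k a ε)
    (γ : ℤ → ℝ) (hγ : ∀ n : ℤ, γ n = ∫ ω, X n ω * X 0 ω ∂μ)
    (hγsum : Summable fun n : ℤ => |γ n|) :
    ∃ C : ℝ, 0 < C ∧ ∀ M : ℕ, 1 ≤ M →
      ∫ ω, (∑ n ∈ Finset.Icc (1 : ℤ) M, X n ω) ^ 4 ∂μ ≤ C * (M : ℝ) ^ 2 := by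
  classical
  subst hX
  set m5 : ℝ := ∫ ω, |ε 0 ω| ^ (5:ℕ) ∂μ with hm5def
  have hm5 : 0 ≤ m5 := integral_nonneg fun ω => pow_nonneg (abs_nonneg _) _
  set A : ℝ := ∑' i : ℤ, |a i| with hAdef
  have hA0 : 0 ≤ A := tsum_nonneg fun i => abs_nonneg _
  set K : ℝ := (1 + m5) ^ (4 * k) * (3 * (k:ℝ)^4 + 4 * (k:ℝ)^6) with hKdef
  have hK0 : 0 ≤ K := by positivity
  refine ⟨max 1 ((A ^ k) ^ 4 * K), lt_of_lt_of_le zero_lt_one (le_max_left _ _), ?_⟩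
  intro M hM
  set s : Finset ℤ := Finset.Icc (1:ℤ) (M:ℤ) with hsdef
  set R : ℝ := K * (M:ℝ) ^ 2 with hRdef
  have hR0 : 0 ≤ R := by positivity
  -- per-tuple objects
  set T : IncrTupleZ k → Ω → ℝ := fun i ω => ∑ n ∈ s, ∏ j, ε (n - i.1 j) ω with hTdef
  set c : IncrTupleZ k → ℝ := fun i => ∏ j, a (i.1 j) with hcdef
  have hTmeas : ∀ i, Measurable (T i) := fun i =>
    Finset.measurable_sum s (fun n _ => Finset.measurable_prod _ (fun j _ => hmeas _))
  have hcore : ∀ i : IncrTupleZ k,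
      Integrable (fun ω => (T i ω) ^ 4) μ ∧ ∫ ω, (T i ω)^4 ∂μ ≤ R := by
    intro i
    have h := core_bound ε hmeas hindep hident hmean hmom5 k hk i.1 i.2.1.injective M hM
    refine ⟨h.1, le_trans h.2 (le_of_eq ?_)⟩
    rw [hRdef, hKdef]
  have hT4 : ∀ i, eLpNorm (T i) 4 μ ≤ ENNReal.ofReal R ^ ((4:ℝ)⁻¹) := fun i =>
    eLpNorm_four_le (hcore i).1 (hcore i).2
  -- the finite approximations
  have hfin : ∀ L : ℕ, ((Subtype.val ⁻¹'
      (↑(Fintype.piFinset (fun _ : Fin k => Finset.Icc (1:ℤ) (L:ℤ))) : Set (Fin k → ℤ)))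
        : Set (IncrTupleZ k)).Finite := by
    intro L
    apply Set.Finite.preimage
    · exact fun x _ y _ hxy => Subtype.ext hxy
    · exact (Fintype.piFinset _).finite_toSet
  set AL : ℕ → Finset (IncrTupleZ k) := fun L => (hfin L).toFinset with hALdef
  have hALmem : ∀ (L : ℕ) (i : IncrTupleZ k),
      i ∈ AL L ↔ ∀ j, i.1 j ∈ Finset.Icc (1:ℤ) (L:ℤ) := by
    intro L i
    rw [hALdef, Set.Finite.mem_toFinset]
    simp only [Set.mem_preimage, Finset.mem_coe, Fintype.mem_piFinset]
  have hALmono : Monotone AL := by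
    intro L L' hLL' i hi
    rw [hALmem] at hi ⊢
    intro j
    have := hi j
    rw [Finset.mem_Icc] at this ⊢
    omega
  have hALexh : ∀ i : IncrTupleZ k, ∃ L, i ∈ AL L := by
    intro i
    refine ⟨Finset.univ.sup (fun j => (i.1 j).toNat), ?_⟩
    rw [hALmem]
    intro j
    have h1 : ((i.1 j).toNat : ℤ) = i.1 j := Int.toNat_of_nonneg (le_of_lt (i.2.2 j))
    have h2 : (i.1 j).toNat ≤ Finset.univ.sup (fun j => (i.1 j).toNat) :=
      Finset.le_sup (f := fun j => (i.1 j).toNat) (Finset.mem_univ j)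
    rw [Finset.mem_Icc]
    constructor
    · exact i.2.2 j
    · omega
  set SL : ℕ → Ω → ℝ := fun L ω => ∑ i ∈ AL L, c i * T i ω with hSLdef
  have hSLmeas : ∀ L, Measurable (SL L) := fun L =>
    Finset.measurable_sum _ (fun i _ => (hTmeas i).const_mul _)
  -- a.e. summability
  have habs1 : Integrable (fun ω => |ε 0 ω|) μ := by
    have h := integrable_abs_pow (μ := μ) (hmeas 0) hmom5 (p := 1) (by norm_num)
    simpa using h
  set e1 : ℝ := ∫ ω, |ε 0 ω| ∂μ with he1def
  have habsm : ∀ m : ℤ, Integrable (fun ω => |ε m ω|) μ := by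
    intro m
    exact ((hident m).comp (u := fun x : ℝ => |x|) continuous_abs.measurable).integrable_iff.2
      habs1
  have hprodabs : ∀ (n : ℤ) (i : IncrTupleZ k),
      Integrable (fun ω => ∏ j, |ε (n - i.1 j) ω|) μ ∧
        ∫ ω, ∏ j, |ε (n - i.1 j) ω| ∂μ = e1 ^ k := by
    intro n i
    have hinj : ∀ x ∈ Finset.univ, ∀ y ∈ Finset.univ,
        (fun j : Fin k => n - i.1 j) x = (fun j : Fin k => n - i.1 j) y → x = y := by
      intro x _ y _ hxy
      have hxy' : n - i.1 x = n - i.1 y := hxy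
      exact i.2.1.injective (by omega)
    have hre : ∀ ω, (∏ j, |ε (n - i.1 j) ω|)
        = ∏ m ∈ Finset.image (fun j : Fin k => n - i.1 j) Finset.univ, |ε m ω| := by
      intro ω
      rw [Finset.prod_image hinj]
    have hfam := indep_prod_integral (fun m ω => |ε m ω|)
      (hindep.comp (fun _ x => |x|) (fun _ => continuous_abs.measurable))
      (fun m => (hmeas m).abs) habsm
      (Finset.image (fun j : Fin k => n - i.1 j) Finset.univ)
    constructor
    · rw [show (fun ω => ∏ j, |ε (n - i.1 j) ω|)
        = fun ω => ∏ m ∈ Finset.image (fun j : Fin k => n - i.1 j) Finset.univ, |ε m ω|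
        from funext hre]
      exact hfam.1
    · calc ∫ ω, ∏ j, |ε (n - i.1 j) ω| ∂μ
          = ∫ ω, ∏ m ∈ Finset.image (fun j : Fin k => n - i.1 j) Finset.univ, |ε m ω| ∂μ :=
            integral_congr_ae (ae_of_all _ hre)
        _ = ∏ m ∈ Finset.image (fun j : Fin k => n - i.1 j) Finset.univ, ∫ ω, |ε m ω| ∂μ :=
            hfam.2
        _ = ∏ _m ∈ Finset.image (fun j : Fin k => n - i.1 j) Finset.univ, e1 :=
            Finset.prod_congr rfl fun m _ =>
              ((hident m).comp (u := fun x : ℝ => |x|) continuous_abs.measurable).integral_eq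
        _ = e1 ^ k := by
            rw [Finset.prod_const, Finset.card_image_of_injOn hinj, Finset.card_univ,
              Fintype.card_fin]
  have hmeasprod : ∀ (n : ℤ) (i : IncrTupleZ k),
      Measurable (fun ω => ∏ j, (a (i.1 j) * ε (n - i.1 j) ω)) := by
    intro n i
    exact Finset.measurable_prod _ (fun j _ => (hmeas _).const_mul _)
  have haesum : ∀ᵐ ω ∂μ, ∀ n : ℤ,
      Summable (fun i : IncrTupleZ k => ∏ j, (a (i.1 j) * ε (n - i.1 j) ω)) := by
    rw [MeasureTheory.ae_all_iff]
    intro n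
    have heach : ∀ i : IncrTupleZ k,
        ∫⁻ ω, ((‖∏ j, (a (i.1 j) * ε (n - i.1 j) ω)‖₊ : ℝ≥0∞)) ∂μ
          = ENNReal.ofReal ((∏ j, |a (i.1 j)|) * e1 ^ k) := by
      intro i
      have hptw : ∀ ω, ((‖∏ j, (a (i.1 j) * ε (n - i.1 j) ω)‖₊ : ℝ≥0∞))
          = ENNReal.ofReal ((∏ j, |a (i.1 j)|) * ∏ j, |ε (n - i.1 j) ω|) := by
        intro ω
        rw [← enorm_eq_nnnorm, Real.enorm_eq_ofReal_abs, Finset.abs_prod]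
        congr 1
        rw [← Finset.prod_mul_distrib]
        exact Finset.prod_congr rfl fun j _ => abs_mul _ _
      rw [lintegral_congr hptw,
        ← ofReal_integral_eq_lintegral_ofReal ((hprodabs n i).1.const_mul _)
          (ae_of_all _ fun ω => mul_nonneg (Finset.prod_nonneg fun _ _ => abs_nonneg _)
            (Finset.prod_nonneg fun _ _ => abs_nonneg _)),
        integral_const_mul, (hprodabs n i).2]
    have hbound : ∑' i : IncrTupleZ k,
        ENNReal.ofReal ((∏ j, |a (i.1 j)|) * e1 ^ k)
          ≤ ENNReal.ofReal (A ^ k * e1 ^ k) := by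
      refine Summable.tsum_le_of_sum_le ENNReal.summable ?_
      intro u
      rw [← ENNReal.ofReal_sum_of_nonneg (fun i _ =>
        mul_nonneg (Finset.prod_nonneg fun _ _ => abs_nonneg _) (by positivity))]
      apply ENNReal.ofReal_le_ofReal
      rw [← Finset.sum_mul]
      refine mul_le_mul_of_nonneg_right ?_ (by positivity)
      exact coeff_sum_bound k a ha u
    have hlt : ∫⁻ ω, ∑' i : IncrTupleZ k,
        ((‖∏ j, (a (i.1 j) * ε (n - i.1 j) ω)‖₊ : ℝ≥0∞)) ∂μ ≠ ⊤ := by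
      rw [lintegral_tsum (fun i => ((hmeasprod n i).nnnorm.coe_nnreal_ennreal).aemeasurable)]
      rw [tsum_congr heach]
      exact ne_top_of_le_ne_top ENNReal.ofReal_ne_top hbound
    have hae := ae_lt_top (Measurable.ennreal_tsum
      (fun i => (hmeasprod n i).nnnorm.coe_nnreal_ennreal)) hlt
    filter_upwards [hae] with ω hω
    have h1 : Summable (fun i : IncrTupleZ k => ‖∏ j, (a (i.1 j) * ε (n - i.1 j) ω)‖₊) :=
      ENNReal.tsum_coe_ne_top_iff_summable.1 hω.ne
    have h2 : Summable (fun i : IncrTupleZ k => ‖∏ j, (a (i.1 j) * ε (n - i.1 j) ω)‖) := by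
      simpa [coe_nnnorm] using NNReal.summable_coe.2 h1
    exact h2.of_norm
  -- a.e. convergence of SL to the partial sum of the process
  have hTend : ∀ᵐ ω ∂μ, Filter.Tendsto (fun L => SL L ω) Filter.atTop
      (nhds (∑ n ∈ s, polyForm k a ε n ω)) := by
    filter_upwards [haesum] with ω hω
    have hALtop : Filter.Tendsto AL Filter.atTop Filter.atTop :=
      Filter.tendsto_atTop_finset_of_monotone hALmono hALexh
    have hterm : ∀ i : IncrTupleZ k,
        c i * T i ω = ∑ n ∈ s, ∏ j, (a (i.1 j) * ε (n - i.1 j) ω) := by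
      intro i
      show (∏ j, a (i.1 j)) * (∑ n ∈ s, ∏ j, ε (n - i.1 j) ω) = _
      rw [Finset.mul_sum]
      exact Finset.sum_congr rfl fun n _ => (Finset.prod_mul_distrib).symm
    have h1 : ∀ L, SL L ω = ∑ n ∈ s, ∑ i ∈ AL L, ∏ j, (a (i.1 j) * ε (n - i.1 j) ω) := by
      intro L
      calc SL L ω = ∑ i ∈ AL L, c i * T i ω := rfl
        _ = ∑ i ∈ AL L, ∑ n ∈ s, ∏ j, (a (i.1 j) * ε (n - i.1 j) ω) :=
            Finset.sum_congr rfl fun i _ => hterm i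
        _ = ∑ n ∈ s, ∑ i ∈ AL L, ∏ j, (a (i.1 j) * ε (n - i.1 j) ω) := Finset.sum_comm
    have h2 : Filter.Tendsto
        (fun L => ∑ n ∈ s, ∑ i ∈ AL L, ∏ j, (a (i.1 j) * ε (n - i.1 j) ω))
        Filter.atTop
        (nhds (∑ n ∈ s, ∑' i : IncrTupleZ k, ∏ j, (a (i.1 j) * ε (n - i.1 j) ω))) := by
      refine tendsto_finset_sum s fun n _ => ?_
      exact ((hω n).hasSum.comp hALtop)
    exact Filter.Tendsto.congr (fun L => (h1 L).symm) h2
  -- uniform L⁴-norm bound on SL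
  have hSLnorm : ∀ L, eLpNorm (SL L) 4 μ ≤
      ENNReal.ofReal (A ^ k) * ENNReal.ofReal R ^ ((4:ℝ)⁻¹) := by
    intro L
    have hfun : SL L = ∑ i ∈ AL L, (c i • T i) := by
      funext ω
      rw [Finset.sum_apply]
      rfl
    rw [hfun]
    refine le_trans (eLpNorm_sum_le
      (fun i _ => (((hTmeas i).const_mul (c i)).aestronglyMeasurable)) (by norm_num)) ?_
    calc ∑ i ∈ AL L, eLpNorm (c i • T i) 4 μ
        = ∑ i ∈ AL L, ((‖c i‖₊ : ℝ≥0∞) * eLpNorm (T i) 4 μ) := by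
          refine Finset.sum_congr rfl fun i _ => ?_
          rw [eLpNorm_const_smul]
          rfl
      _ ≤ ∑ i ∈ AL L, ((‖c i‖₊ : ℝ≥0∞) * ENNReal.ofReal R ^ ((4:ℝ)⁻¹)) :=
          Finset.sum_le_sum fun i _ => mul_le_mul_right (hT4 i) _
      _ = (∑ i ∈ AL L, ((‖c i‖₊ : ℝ≥0∞))) * ENNReal.ofReal R ^ ((4:ℝ)⁻¹) := by
          rw [Finset.sum_mul]
      _ ≤ ENNReal.ofReal (A ^ k) * ENNReal.ofReal R ^ ((4:ℝ)⁻¹) := by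
          refine mul_le_mul_left ?_ _
          have h1 : ∀ i ∈ AL L, ((‖c i‖₊ : ℝ≥0∞)) = ENNReal.ofReal (∏ j, |a (i.1 j)|) := by
            intro i _
            rw [← enorm_eq_nnnorm, Real.enorm_eq_ofReal_abs]
            congr 1
            exact Finset.abs_prod _ _
          rw [Finset.sum_congr rfl h1,
            ← ENNReal.ofReal_sum_of_nonneg
              (fun i _ => Finset.prod_nonneg fun _ _ => abs_nonneg _)]
          exact ENNReal.ofReal_le_ofReal (coeff_sum_bound k a ha (AL L))
  have hofr4 : (ENNReal.ofReal (A ^ k) * ENNReal.ofReal R ^ ((4:ℝ)⁻¹)) ^ (4:ℝ)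
      = ENNReal.ofReal ((A ^ k) ^ 4 * R) := by
    rw [ENNReal.mul_rpow_of_nonneg _ _ (by norm_num : (0:ℝ) ≤ 4)]
    rw [← ENNReal.rpow_mul (ENNReal.ofReal R)]
    norm_num
    rw [← ENNReal.ofReal_pow (by positivity), ← ENNReal.ofReal_mul (by positivity)]
  have hSLlint : ∀ L, ∫⁻ ω, ((‖SL L ω‖₊ : ℝ≥0∞)) ^ (4:ℕ) ∂μ ≤
      ENNReal.ofReal ((A ^ k) ^ 4 * R) := by
    intro L
    have h1 : ∫⁻ ω, ((‖SL L ω‖₊ : ℝ≥0∞)) ^ (4:ℕ) ∂μ = (eLpNorm (SL L) 4 μ) ^ (4:ℝ) := by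
      rw [eLpNorm_eq_lintegral_rpow_enorm_toReal (by norm_num) (by norm_num)]
      rw [show ((4:ℝ≥0∞)).toReal = (4:ℝ) by norm_num]
      rw [← ENNReal.rpow_mul]
      norm_num
      rfl
    rw [h1, ← hofr4]
    exact ENNReal.rpow_le_rpow (hSLnorm L) (by norm_num)
  -- Fatou
  have hSmeas : AEStronglyMeasurable (fun ω => ∑ n ∈ s, polyForm k a ε n ω) μ :=
    aestronglyMeasurable_of_tendsto_ae Filter.atTop
      (fun L => (hSLmeas L).aestronglyMeasurable) hTend
  have hFatou : ∫⁻ ω, ((‖∑ n ∈ s, polyForm k a ε n ω‖₊ : ℝ≥0∞)) ^ (4:ℕ) ∂μ ≤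
      ENNReal.ofReal ((A ^ k) ^ 4 * R) := by
    have hmeas4 : ∀ L, Measurable fun ω => ((‖SL L ω‖₊ : ℝ≥0∞)) ^ (4:ℕ) :=
      fun L => ((hSLmeas L).nnnorm.coe_nnreal_ennreal).pow_const 4
    have hlim : ∀ᵐ ω ∂μ, ((‖∑ n ∈ s, polyForm k a ε n ω‖₊ : ℝ≥0∞)) ^ (4:ℕ)
        = Filter.liminf (fun L => ((‖SL L ω‖₊ : ℝ≥0∞)) ^ (4:ℕ)) Filter.atTop := by
      filter_upwards [hTend] with ω hω
      have h1 : Filter.Tendsto (fun L => ((‖SL L ω‖₊ : ℝ≥0∞)) ^ (4:ℕ)) Filter.atTop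
          (nhds (((‖∑ n ∈ s, polyForm k a ε n ω‖₊ : ℝ≥0∞)) ^ (4:ℕ))) :=
        ((ENNReal.continuous_pow 4).tendsto _).comp (ENNReal.tendsto_coe.2 hω.nnnorm)
      exact h1.liminf_eq.symm
    calc ∫⁻ ω, ((‖∑ n ∈ s, polyForm k a ε n ω‖₊ : ℝ≥0∞)) ^ (4:ℕ) ∂μ
        = ∫⁻ ω, Filter.liminf (fun L => ((‖SL L ω‖₊ : ℝ≥0∞)) ^ (4:ℕ)) Filter.atTop ∂μ :=
          lintegral_congr_ae hlim
      _ ≤ Filter.liminf (fun L => ∫⁻ ω, ((‖SL L ω‖₊ : ℝ≥0∞)) ^ (4:ℕ) ∂μ) Filter.atTop :=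
          lintegral_liminf_le hmeas4
      _ ≤ ENNReal.ofReal ((A ^ k) ^ 4 * R) := by
          refine le_trans (Filter.liminf_le_liminf (Filter.Eventually.of_forall hSLlint)) ?_
          rw [Filter.liminf_const]
  -- conclusion
  have hnn : 0 ≤ᵐ[μ] fun ω => (∑ n ∈ s, polyForm k a ε n ω) ^ 4 :=
    ae_of_all _ fun ω => by positivity
  rw [integral_eq_lintegral_of_nonneg_ae hnn
    ((hSmeas.aemeasurable.pow_const 4).aestronglyMeasurable)]
  have hcongr : ∫⁻ ω, ENNReal.ofReal ((∑ n ∈ s, polyForm k a ε n ω) ^ 4) ∂μ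
      = ∫⁻ ω, ((‖∑ n ∈ s, polyForm k a ε n ω‖₊ : ℝ≥0∞)) ^ (4:ℕ) ∂μ :=
    lintegral_congr fun ω => (nnnorm_pow4 _).symm
  rw [hcongr]
  have hfinal : ((A ^ k) ^ 4 * R) ≤ max 1 ((A ^ k) ^ 4 * K) * (M:ℝ) ^ 2 := by
    rw [hRdef]
    calc (A ^ k) ^ 4 * (K * (M:ℝ) ^ 2) = ((A ^ k) ^ 4 * K) * (M:ℝ) ^ 2 := by ring
      _ ≤ max 1 ((A ^ k) ^ 4 * K) * (M:ℝ) ^ 2 :=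
          mul_le_mul_of_nonneg_right (le_max_right _ _) (by positivity)
  exact le_trans (ENNReal.toReal_le_of_le_ofReal (by positivity) hFatou) hfinal
end
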